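/- arXiv:0712.3757 — 13 statements merged into one kernel-verified Lean document; each statement's English description precedes it below -/
import Mathlib

section
/- Let q = 2^k and define polynomials B_i over GF(2^{nk}) by B_1(x) = 1, B_2(x) = 1, and B_{i+2}(x) = B_{i+1}(x) + x^{q^i} · B_i(x) for i ≥ 1. Then for all 1 ≤ i ≤ n-1, B_{i+2}(x) = B_{i+1}(x)^q + x^q · B_i(x)^{q^2} for every x in GF(2^{nk}). -/
open Finset

/-- The polynomials `B_i` from the paper: `B_1 = B_2 = 1`,
`B_{i+2}(x) = B_{i+1}(x) + x^{2^{ik}} B_i(x)`. -/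
def B {F : Type*} [Field F] (k : ℕ) (x : F) : ℕ → F
  | 0 => 1
  | 1 => 1
  | 2 => 1
  | i + 3 => B k x (i + 2) + x ^ (2 ^ ((i + 1) * k)) * B k x (i + 1)

section Aux

variable {F : Type*} [Field F] [CharP F 2] (k : ℕ) (x : F)

private lemma frob_add (a b : F) (m : ℕ) : (a + b) ^ (2 ^ m) = a ^ (2 ^ m) + b ^ (2 ^ m) :=
  add_pow_char_pow a b 2 m

private lemma pwk (a b c : ℕ) (h : a + b = c) : (x ^ (2 ^ a)) ^ (2 ^ b) = x ^ (2 ^ c) := by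
  subst h; rw [← pow_mul, ← pow_add]

private lemma key : ∀ i : ℕ, 1 ≤ i → B k x (i + 2) =
    B k x (i + 1) ^ (2 ^ k) + x ^ (2 ^ k) * B k x i ^ (2 ^ (2 * k)) := by
  intro i
  induction i using Nat.strong_induction_on with
  | _ i IH =>
    match i with
    | 0 => intro h; omega
    | 1 =>
      intro _
      have h3 : B k x 3 = 1 + x ^ (2 ^ (1 * k)) * 1 := rfl
      rw [h3]
      simp [B, one_mul]
    | 2 =>
      intro _
      have h3 : B k x 3 = 1 + x ^ (2 ^ (1 * k)) * 1 := rfl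
      have h4 : B k x 4 = B k x 3 + x ^ (2 ^ (2 * k)) * 1 := rfl
      have hB2 : B k x 2 = 1 := rfl
      rw [h4, h3, hB2, frob_add, mul_pow, one_pow, one_pow, mul_one, mul_one, mul_one,
        pwk x (1 * k) k (2 * k) (by ring)]
      ring
    | (m + 3) =>
      intro _
      have h1 : B k x (m + 4) = B k x (m + 3) ^ (2 ^ k) +
          x ^ (2 ^ k) * B k x (m + 2) ^ (2 ^ (2 * k)) := IH (m + 2) (by omega) (by omega)
      have h2 : B k x (m + 3) = B k x (m + 2) ^ (2 ^ k) +
          x ^ (2 ^ k) * B k x (m + 1) ^ (2 ^ (2 * k)) := IH (m + 1) (by omega) (by omega)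
      have hd : B k x (m + 4) =
          B k x (m + 3) + x ^ (2 ^ ((m + 2) * k)) * B k x (m + 2) := rfl
      have hc : B k x (m + 3) =
          B k x (m + 2) + x ^ (2 ^ ((m + 1) * k)) * B k x (m + 1) := rfl
      have he : B k x (m + 5) =
          B k x (m + 4) + x ^ (2 ^ ((m + 3) * k)) * B k x (m + 3) := rfl
      show B k x (m + 5) =
          B k x (m + 4) ^ (2 ^ k) + x ^ (2 ^ k) * B k x (m + 3) ^ (2 ^ (2 * k))
      rw [he]
      nth_rewrite 2 [hd]
      rw [h1]
      -- occurrences of B k x (m+3): 1 in (B(m+3))^q, 2 in x^{E3} * B(m+3),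
      -- 3 in (B(m+3) + ...)^q, 4 in B(m+3)^{q^2}
      nth_rewrite 2 [h2]
      nth_rewrite 3 [hc]
      rw [frob_add, frob_add, mul_pow, mul_pow,
        pwk x ((m + 2) * k) k ((m + 3) * k) (by ring),
        pwk x ((m + 1) * k) (2 * k) ((m + 3) * k) (by ring)]
      ring

end Aux

theorem stmt0 (n k : ℕ) (hn : 2 ≤ n) (hk : 1 ≤ k)
    (F : Type*) [Field F] [Fintype F] (hF : Fintype.card F = 2 ^ (n * k)) :
    ∀ i : ℕ, 1 ≤ i → i ≤ n - 1 → ∀ x : F,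
      B k x (i + 2) =
        (B k x (i + 1)) ^ (2 ^ k) + x ^ (2 ^ k) * (B k x i) ^ (2 ^ (2 * k)) := by
  have hchar : CharP F 2 := by
    haveI : CharP F (ringChar F) := ringChar.charP F
    obtain ⟨m, hp, hcard⟩ := FiniteField.card F (ringChar F)
    have hdvd : ringChar F ∣ 2 ^ (n * k) := by
      rw [← hF, hcard]
      exact dvd_pow_self _ (by positivity)
    have h2 : ringChar F = 2 :=
      (Nat.prime_dvd_prime_iff_eq hp Nat.prime_two).mp (hp.dvd_of_dvd_pow hdvd)
    rw [← h2]
    infer_instance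
  intro i hi _ x
  exact key k x i hi
end

section
/- Let v be an element of GF(2^{nk}) not in GF(2^k), write v_i = v^{2^{ik}}, and set V = v_0^{2^{2k}+1} / (v_0 + v_1)^{2^k+1}. Then for every i with 2 ≤ i ≤ n+1, B_i(V) = (∑_{j=1}^{i} v_j) / (v_1 + v_2) · ∏_{j=2}^{i-1} (v_0/(v_0+v_1))^{2^{jk}}, where the empty product equals 1. -/
/-!
Write `f j = v ^ 2 ^ (j k)`. As Frobenius is additive in characteristic two, the conjugates of `V`
are `V ^ 2 ^ (j k) = f j f (j+2) / ((f j + f (j+1)) (f (j+1) + f (j+2)))`. For any sequence `f`,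
the closed form `(∑_{j ≤ i} f j) / (f 1 + f 2) * ∏_{2 ≤ j < i} f j / (f j + f (j+1))` satisfies
the recurrence of the `B_i` with these coefficients from index 2 on: after clearing denominators
the step reduces to `(S + y)(y + z) + z S = y (S + y + z)`, which holds because `2 S z = 0`.
-/

open Finset

theorem B_eq_of_recurrence {F : Type*} [Field F] (k : ℕ) (x : F) (R : ℕ → F)
    (h2 : R 2 = 1) (h3 : R 3 = 1 + x ^ 2 ^ k)
    (hrec : ∀ i, R (i + 4) = R (i + 3) + x ^ 2 ^ ((i + 2) * k) * R (i + 2)) :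
    ∀ i, 2 ≤ i → B k x i = R i := by
  suffices h : ∀ m, B k x (m + 2) = R (m + 2) ∧ B k x (m + 3) = R (m + 3) by
    intro i hi
    obtain ⟨m, rfl⟩ := Nat.exists_eq_add_of_le' hi
    exact (h m).1
  intro m
  induction m with
  | zero => simp [B, h2, h3]
  | succ m ih => exact ⟨ih.2, by rw [hrec, ← ih.1, ← ih.2]; rfl⟩

section ClosedForm

variable {F : Type*} [Field F]

def closedForm (f : ℕ → F) (i : ℕ) : F :=
  (∑ j ∈ Icc 1 i, f j) / (f 1 + f 2) * ∏ j ∈ Icc 2 (i - 1), f j / (f j + f (j + 1))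

theorem closedForm_two (f : ℕ → F) (h : f 1 + f 2 ≠ 0) : closedForm f 2 = 1 := by
  simp [closedForm, sum_Icc_succ_top, h]

variable [CharP F 2]

theorem closedForm_three (f : ℕ → F) (h12 : f 1 + f 2 ≠ 0) (h23 : f 2 + f 3 ≠ 0) :
    closedForm f 3 = 1 + f 1 * f 3 / ((f 1 + f 2) * (f 2 + f 3)) := by
  rw [closedForm, sum_Icc_succ_top (by norm_num : 1 ≤ 3), sum_Icc_succ_top (by norm_num : 1 ≤ 2),
    Icc_self, sum_singleton, show 3 - 1 = 2 from rfl, Icc_self, prod_singleton]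
  simp only [Nat.reduceAdd]
  field_simp
  linear_combination -(f 1 * f 3) * CharTwo.two_eq_zero (R := F)

theorem closedForm_add_four (f : ℕ → F) (i : ℕ) (hxy : f (i + 2) + f (i + 3) ≠ 0)
    (hyz : f (i + 3) + f (i + 4) ≠ 0) :
    closedForm f (i + 4) = closedForm f (i + 3) +
      f (i + 2) * f (i + 4) / ((f (i + 2) + f (i + 3)) * (f (i + 3) + f (i + 4))) *
        closedForm f (i + 2) := by
  simp only [closedForm, show i + 4 - 1 = i + 3 by omega, show i + 3 - 1 = i + 2 by omega,
    show i + 2 - 1 = i + 1 by omega]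
  rw [sum_Icc_succ_top (by omega : 1 ≤ i + 4), sum_Icc_succ_top (by omega : 1 ≤ i + 3),
    prod_Icc_succ_top (by omega : 2 ≤ i + 3), prod_Icc_succ_top (by omega : 2 ≤ i + 2)]
  simp only [add_assoc, Nat.reduceAdd]
  set S := ∑ j ∈ Icc 1 (i + 2), f j
  set P := ∏ j ∈ Icc 2 (i + 1), f j / (f j + f (j + 1))
  field_simp
  linear_combination -(f (i + 2) * f (i + 4) * S * P / (f 1 + f 2)) * CharTwo.two_eq_zero (R := F)

end ClosedForm

section Frobenius

variable {F : Type*} [Field F]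

theorem charP_two_of_card_eq_two_pow [Fintype F] {m : ℕ} (hF : Fintype.card F = 2 ^ m) :
    CharP F 2 := by
  have h := FiniteField.cast_card_eq_zero F
  rw [hF, Nat.cast_pow, Nat.cast_ofNat] at h
  exact CharTwo.of_one_ne_zero_of_two_eq_zero one_ne_zero (pow_eq_zero_iff'.mp h).1

theorem pow_two_pow_pow_two_pow {M : Type*} [Monoid M] (v : M) (a b : ℕ) :
    (v ^ 2 ^ a) ^ 2 ^ b = v ^ 2 ^ (a + b) := by
  rw [← pow_mul, ← pow_add]

variable [CharP F 2]

theorem add_conj_pow_two_pow (v : F) (j k : ℕ) :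
    (v + v ^ 2 ^ k) ^ 2 ^ (j * k) = v ^ 2 ^ (j * k) + v ^ 2 ^ ((j + 1) * k) := by
  rw [add_pow_char_pow, pow_two_pow_pow_two_pow, add_mul, one_mul, add_comm k]

theorem div_add_conj_pow_two_pow (v : F) (j k : ℕ) :
    (v ^ (2 ^ (2 * k) + 1) / (v + v ^ 2 ^ k) ^ (2 ^ k + 1)) ^ 2 ^ (j * k) =
      v ^ 2 ^ (j * k) * v ^ 2 ^ ((j + 2) * k) /
        ((v ^ 2 ^ (j * k) + v ^ 2 ^ ((j + 1) * k)) *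
          (v ^ 2 ^ ((j + 1) * k) + v ^ 2 ^ ((j + 2) * k))) := by
  rw [div_pow, pow_succ, pow_succ, mul_pow, mul_pow, pow_two_pow_pow_two_pow,
    pow_two_pow_pow_two_pow, show 2 * k + j * k = (j + 2) * k by ring,
    show k + j * k = (j + 1) * k by ring, add_conj_pow_two_pow, add_conj_pow_two_pow]
  ring

end Frobenius

theorem stmt1_general (n k : ℕ)
    (F : Type*) [Field F] [Fintype F] (hF : Fintype.card F = 2 ^ (n * k))
    (v : F) (hv : v ^ (2 ^ k) ≠ v) :
    ∀ i : ℕ, 2 ≤ i → i ≤ n + 1 →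
      B k (v ^ (2 ^ (2 * k) + 1) / (v + v ^ (2 ^ k)) ^ (2 ^ k + 1)) i =
        (∑ j ∈ Finset.Icc 1 i, v ^ (2 ^ (j * k))) / (v ^ (2 ^ k) + v ^ (2 ^ (2 * k))) *
          ∏ j ∈ Finset.Icc 2 (i - 1), (v / (v + v ^ (2 ^ k))) ^ (2 ^ (j * k)) := by
  intro i hi _
  have := charP_two_of_card_eq_two_pow hF
  have hconj (j : ℕ) : v ^ 2 ^ (j * k) + v ^ 2 ^ ((j + 1) * k) ≠ 0 := by
    rw [← add_conj_pow_two_pow]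
    exact pow_ne_zero _ fun h => hv (CharTwo.add_eq_zero.mp h).symm
  rw [B_eq_of_recurrence k _ (closedForm fun j => v ^ 2 ^ (j * k))
    (closedForm_two _ (hconj 1)) ?three ?rec i hi, closedForm]
  case three =>
    rw [closedForm_three _ (hconj 1) (hconj 2), ← div_add_conj_pow_two_pow, one_mul]
  case rec =>
    intro j
    rw [closedForm_add_four _ j (hconj (j + 2)) (hconj (j + 3)), div_add_conj_pow_two_pow]
  simp only [one_mul, div_pow, add_conj_pow_two_pow]

theorem stmt1 (n k : ℕ) (hn : 2 ≤ n) (hk : 1 ≤ k)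
    (F : Type*) [Field F] [Fintype F] (hF : Fintype.card F = 2 ^ (n * k))
    (v : F) (hv : v ^ (2 ^ k) ≠ v) :
    ∀ i : ℕ, 2 ≤ i → i ≤ n + 1 →
      B k (v ^ (2 ^ (2 * k) + 1) / (v + v ^ (2 ^ k)) ^ (2 ^ k + 1)) i =
        (∑ j ∈ Finset.Icc 1 i, v ^ (2 ^ (j * k))) / (v ^ (2 ^ k) + v ^ (2 ^ (2 * k))) *
          ∏ j ∈ Finset.Icc 2 (i - 1), (v / (v + v ^ (2 ^ k))) ^ (2 ^ (j * k)) :=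
  stmt1_general n k F hF v hv
end

section
/- Let n > 1 be odd and k ≥ 1. The polynomial B_n(x), defined over GF(2^{nk}) by B_1 = B_2 = 1 and B_{i+2}(x) = B_{i+1}(x) + x^{2^{ik}} B_i(x), has exactly (2^{(n-1)k} - 1)/(2^{2k} - 1) distinct zeros in GF(2^{nk}). -/
open Finset

/-!
Write `q = 2 ^ k`. Since `x ↦ x ^ q` is additive, `B_i(x) = P_i(x) ^ q` for the polynomials
`P_i = BRoot F k i`, which satisfy the recursion of `B_i` with `x ^ q ^ (i - 1)` in place of
`x ^ q ^ i`. For odd `n`,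
`deg P_n ≤ 1 + q ^ 2 + ⋯ + q ^ (n - 3) = (q ^ (n - 1) - 1) / (q ^ 2 - 1)`,
which bounds the number of zeros from above.

Conversely, if `z` and `z'` both solve `w ^ (q + 1) + w = x`, then
`(z + z') B_i(x) = z ^ e_i + z' ^ e_i` with `e_i = 1 + q + ⋯ + q ^ (i - 1)`.
For `θ ∈ 𝔽_{q^n} \ 𝔽_q` take `z ^ q = (θ ^ q + θ) / (θ ^ q ^ 2 + θ)` (the denominator is
nonzero as `n` is odd): then `z' = θ ^ (q - 1) z` is a second solution for
`x = z ^ (q + 1) + z`, and `θ ^ ((q - 1) e_n) = θ ^ (q ^ n - 1) = 1` forces `B_n(x) = 0`.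
Each fibre of `θ ↦ x` lies in the zero set of a nonzero polynomial of degree `q ^ 3 - q` in `θ`,
so `B_n` has at least `(q ^ n - q) / (q ^ 3 - q)` zeros, which is the upper bound again.
-/

open Polynomial

section

variable {F : Type*} [Field F]

theorem B_zero (k : ℕ) : ∀ i, B k (0 : F) i = 1
  | 0 | 1 | 2 => rfl
  | i + 3 => by rw [B, B_zero k (i + 2), zero_pow (by positivity), zero_mul, add_zero]

theorem pow_mul_geomSum_eq_one {q n : ℕ} (hq : 0 < q) {θ : F} (hθ : θ ≠ 0)
    (hθn : θ ^ q ^ n = θ) : θ ^ ((q - 1) * ∑ j ∈ range n, q ^ j) = 1 := by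
  have hsum : (∑ j ∈ range n, q ^ j) * (q - 1) + 1 = q ^ n := by
    have := geom_sum_mul_add (q - 1) n
    rwa [Nat.sub_one_add_one hq.ne'] at this
  refine mul_right_cancel₀ hθ ?_
  rw [← pow_succ, mul_comm, hsum, hθn, one_mul]

theorem pow_pow_two_ne_self_of_odd {q n : ℕ} (hodd : Odd n) {θ : F} (hθn : θ ^ q ^ n = θ)
    (hθ : θ ^ q ≠ θ) : θ ^ q ^ 2 ≠ θ := by
  intro h
  have heven (j : ℕ) : θ ^ q ^ (2 * j) = θ := by
    induction j with
    | zero => simp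
    | succ j ih => rw [mul_add_one, pow_add, pow_mul, ih, h]
  obtain ⟨m, rfl⟩ := hodd
  rw [pow_succ, pow_mul, heven m] at hθn
  exact hθ hθn

theorem card_pow_eq_self_le [Fintype F] [DecidableEq F] {q : ℕ} (hq : 1 < q) :
    #{θ : F | θ ^ q = θ} ≤ q := by
  refine (card_le_degree_of_subset_roots fun θ hθ => ?_).trans
    (FiniteField.X_pow_card_sub_X_natDegree_eq F hq).le
  simp only [Finset.mem_val, Finset.mem_filter, Finset.mem_univ, true_and] at hθ
  simp [mem_roots (FiniteField.X_pow_card_sub_X_ne_zero F hq), hθ]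

theorem card_sub_le_card_pow_ne_self [Fintype F] [DecidableEq F] {q : ℕ} (hq : 1 < q) :
    Fintype.card F - q ≤ #{θ : F | θ ^ q ≠ θ} := by
  have hsplit := card_filter_add_card_filter_not (s := univ) (fun θ : F => θ ^ q = θ)
  rw [card_univ] at hsplit
  have := card_pow_eq_self_le (F := F) hq
  change _ ≤ #{θ | ¬θ ^ q = θ}
  omega

noncomputable def BRoot (F : Type*) [Field F] (k : ℕ) : ℕ → F[X]
  | 0 => 1
  | 1 => 1
  | 2 => 1
  | i + 3 => BRoot F k (i + 2) + X ^ 2 ^ (i * k) * BRoot F k (i + 1)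

def degBound (q : ℕ) : ℕ → ℕ
  | 0 => 0
  | 1 => 0
  | 2 => 0
  | i + 3 => q ^ i + degBound q (i + 1)

theorem B_eq_eval_BRoot_pow [CharP F 2] (k : ℕ) (x : F) :
    ∀ i, B k x i = (BRoot F k i).eval x ^ 2 ^ k
  | 0 | 1 | 2 => by simp [B, BRoot]
  | i + 3 => by
    rw [B, BRoot, B_eq_eval_BRoot_pow k x (i + 2), B_eq_eval_BRoot_pow k x (i + 1), eval_add,
      eval_mul, eval_pow, eval_X, add_pow_char_pow, mul_pow, ← pow_mul, ← pow_add, add_one_mul]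

theorem BRoot_eval_zero (k : ℕ) : ∀ i, (BRoot F k i).eval 0 = 1
  | 0 | 1 | 2 => by simp [BRoot]
  | i + 3 => by simp [BRoot, BRoot_eval_zero k (i + 2)]

theorem BRoot_ne_zero (k i : ℕ) : BRoot F k i ≠ 0 := fun h => by
  simpa [h] using BRoot_eval_zero (F := F) k i

theorem degBound_le_succ {q : ℕ} (hq : 0 < q) : ∀ i, degBound q i ≤ degBound q (i + 1)
  | 0 | 1 => le_rfl
  | 2 => Nat.zero_le _
  | i + 3 => by
    have := degBound_le_succ hq (i + 1)
    have : q ^ i ≤ q ^ (i + 1) := Nat.pow_le_pow_right hq i.le_succ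
    simp only [degBound] at *
    omega

theorem natDegree_BRoot_le (k : ℕ) : ∀ i, (BRoot F k i).natDegree ≤ degBound (2 ^ k) i
  | 0 | 1 | 2 => by simp [BRoot, degBound]
  | i + 3 => by
    have h₁ := natDegree_BRoot_le k (i + 1)
    have h₂ := (natDegree_BRoot_le k (i + 2)).trans (degBound_le_succ (by positivity) (i + 2))
    rw [BRoot, show 2 ^ (i * k) = (2 ^ k) ^ i by rw [← pow_mul, mul_comm]]
    refine natDegree_add_le_of_degree_le h₂ (natDegree_mul_le.trans ?_)
    rw [natDegree_X_pow, degBound]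
    omega

theorem degBound_two_mul_add_one (q : ℕ) :
    ∀ m, degBound q (2 * m + 1) * (q ^ 2 - 1) = q ^ (2 * m) - 1
  | 0 => by simp [degBound]
  | m + 1 => by
    have ih := degBound_two_mul_add_one q m
    rw [show 2 * (m + 1) + 1 = 2 * m + 3 by ring, degBound, add_mul, ih, Nat.mul_sub_one,
      show 2 * (m + 1) = 2 * m + 2 by ring, pow_add]
    rcases Nat.eq_zero_or_pos q with rfl | hq
    · rcases m with _ | m <;> simp
    · have := Nat.le_mul_of_pos_right (q ^ (2 * m)) (pow_pos hq 2)
      have := Nat.one_le_pow (2 * m) q hq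
      omega

theorem degBound_mul_of_odd (q : ℕ) {n : ℕ} (hodd : Odd n) :
    degBound q n * (q ^ 2 - 1) = q ^ (n - 1) - 1 := by
  obtain ⟨m, rfl⟩ := hodd
  rw [Nat.add_sub_cancel]
  exact degBound_two_mul_add_one q m

theorem pow_three_sub_mul_degBound_of_odd {q n : ℕ} (hodd : Odd n) :
    (q ^ 3 - q) * degBound q n = q ^ n - q := by
  rw [show q ^ 3 - q = q * (q ^ 2 - 1) by rw [Nat.mul_sub_one, ← pow_succ'], mul_assoc,
    mul_comm (q ^ 2 - 1), degBound_mul_of_odd q hodd, Nat.mul_sub_one, ← pow_succ',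
    Nat.sub_one_add_one hodd.pos.ne']

theorem card_B_eq_zero_le [CharP F 2] [Fintype F] [DecidableEq F] (k n : ℕ) :
    #{x : F | B k x n = 0} ≤ degBound (2 ^ k) n := by
  refine (card_le_degree_of_subset_roots fun x hx => ?_).trans (natDegree_BRoot_le k n)
  rw [mem_roots (BRoot_ne_zero k n)]
  simp only [Finset.mem_val, Finset.mem_filter, Finset.mem_univ, true_and,
    B_eq_eval_BRoot_pow k x n] at hx
  exact pow_eq_zero_iff (by positivity) |>.mp hx

section CharTwo

variable [CharP F 2] {k q : ℕ}

theorem add_pow_pow_of_eq_two_pow (hq : q = 2 ^ k) (a b : F) (i : ℕ) :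
    (a + b) ^ q ^ i = a ^ q ^ i + b ^ q ^ i := by
  rw [hq, ← pow_mul]
  exact add_pow_char_pow ..

theorem add_pow_of_eq_two_pow (hq : q = 2 ^ k) (a b : F) : (a + b) ^ q = a ^ q + b ^ q := by
  simpa using add_pow_pow_of_eq_two_pow hq a b 1

theorem pow_geomSum_add_two (hq : q = 2 ^ k) {w x : F} (hw : w ^ (q + 1) + w = x) (i : ℕ) :
    w ^ ∑ j ∈ range (i + 2), q ^ j =
      w ^ ∑ j ∈ range (i + 1), q ^ j + x ^ q ^ i * w ^ ∑ j ∈ range i, q ^ j := by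
  have hx : x ^ q ^ i = w ^ q ^ (i + 1) * w ^ q ^ i + w ^ q ^ i := by
    rw [← hw, add_pow_pow_of_eq_two_pow hq, ← pow_mul, ← pow_add]
    ring
  rw [sum_range_succ, sum_range_succ, pow_add, pow_add, hx]
  linear_combination (-(w ^ ∑ j ∈ range i, q ^ j) * w ^ q ^ i) * CharTwo.two_eq_zero (R := F)

theorem add_mul_B_eq (hq : q = 2 ^ k) {x z z' : F} (hz : z ^ (q + 1) + z = x)
    (hz' : z' ^ (q + 1) + z' = x) :
    ∀ i, (z + z') * B k x (i + 1) =
      z ^ ∑ j ∈ range (i + 1), q ^ j + z' ^ ∑ j ∈ range (i + 1), q ^ j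
  | 0 => by simp [B]
  | 1 => by
    simp only [B, sum_range_succ, sum_range_zero, pow_zero, pow_one, zero_add, mul_one]
    linear_combination hz + hz' + (x - z ^ (q + 1) - z' ^ (q + 1)) * CharTwo.two_eq_zero (R := F)
  | i + 2 => by
    have h₁ := add_mul_B_eq hq hz hz' i
    have h₂ := add_mul_B_eq hq hz hz' (i + 1)
    rw [B, show 2 ^ ((i + 1) * k) = q ^ (i + 1) by rw [hq, ← pow_mul, mul_comm],
      pow_geomSum_add_two hq hz, pow_geomSum_add_two hq hz']
    linear_combination h₂ + x ^ q ^ (i + 1) * h₁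

theorem pow_succ_add_self_mul_eq (hq : 0 < q) {θ z : F} (hθ : θ ≠ 0)
    (hz : z ^ q * (θ ^ q ^ 2 + θ) = θ ^ q + θ) :
    (θ ^ (q - 1) * z) ^ (q + 1) + θ ^ (q - 1) * z = z ^ (q + 1) + z := by
  have h₁ : θ ^ (q - 1) * θ = θ ^ q := by rw [← pow_succ, Nat.sub_add_cancel hq]
  have h₂ : (θ ^ (q - 1)) ^ (q + 1) * θ = θ ^ q ^ 2 := by
    rw [← pow_mul, ← pow_succ]
    congr 1
    zify [hq, Nat.one_le_pow 2 q hq]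
    ring
  refine mul_left_cancel₀ hθ ?_
  linear_combination z ^ (q + 1) * h₂ + z * h₁ - z * hz
    + (z ^ (q + 1) * θ ^ q ^ 2 - z * θ) * CharTwo.two_eq_zero (R := F)

theorem B_eq_zero_of_pow_mul_eq (hq : q = 2 ^ k) {n : ℕ} (hn : n ≠ 0) {θ z : F}
    (hθ : θ ^ q ≠ θ) (hθn : θ ^ q ^ n = θ) (hz : z ^ q * (θ ^ q ^ 2 + θ) = θ ^ q + θ) :
    B k (z ^ (q + 1) + z) n = 0 := by
  obtain ⟨m, rfl⟩ := Nat.exists_eq_succ_of_ne_zero hn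
  have hq₀ : 0 < q := hq ▸ by positivity
  have hθ₀ : θ ≠ 0 := by
    rintro rfl
    simp [zero_pow hq₀.ne'] at hθ
  have hθq : θ ^ (q - 1) ≠ 1 := fun h => hθ <| by
    rw [← Nat.sub_add_cancel hq₀, pow_succ, h, one_mul]
  have hz₀ : z ≠ 0 := by
    rintro rfl
    rw [zero_pow hq₀.ne', zero_mul] at hz
    exact hθ (CharTwo.add_eq_zero.mp hz.symm)
  have key := add_mul_B_eq hq rfl (pow_succ_add_self_mul_eq hq₀ hθ₀ hz) m
  rw [mul_pow, ← pow_mul, pow_mul_geomSum_eq_one hq₀ hθ₀ hθn, one_mul,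
    CharTwo.add_self_eq_zero, ← one_add_mul] at key
  refine (mul_eq_zero.mp key).resolve_left (mul_ne_zero ?_ hz₀)
  rw [Ne, CharTwo.add_eq_zero]
  exact hθq.symm

end CharTwo

-- With `c = a ^ q`, this clears denominators in `a ^ q = (z ^ q) ^ (q + 1) + z ^ q` for
-- `z ^ q = s / (s ^ q + s)`, `s = θ ^ q + θ`.
noncomputable def fiberPoly (q : ℕ) (c : F) : F[X] :=
  (X ^ (q ^ 2 - q) + C c * (X ^ (q - 1) + 1) ^ (q + 1)).comp (X ^ q + X)

theorem eval_fiberPoly (q : ℕ) (c θ : F) :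
    (fiberPoly q c).eval θ =
      (θ ^ q + θ) ^ (q ^ 2 - q) + c * ((θ ^ q + θ) ^ (q - 1) + 1) ^ (q + 1) := by
  simp [fiberPoly]

theorem eval_zero_fiberPoly {q : ℕ} (hq : 1 < q) (c : F) : (fiberPoly q c).eval 0 = c := by
  have : q < q ^ 2 := lt_self_pow₀ hq one_lt_two
  rw [eval_fiberPoly, zero_pow (by omega), zero_add, zero_pow (by omega), zero_pow (by omega),
    zero_add, zero_add, one_pow, mul_one]

theorem natDegree_fiberPoly_le {q : ℕ} (hq : 0 < q) (c : F) :
    (fiberPoly q c).natDegree ≤ q ^ 3 - q := by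
  have hsq : (q + 1) * (q - 1) = q ^ 2 - 1 := by
    obtain ⟨q, rfl⟩ : ∃ p, q = p + 1 := ⟨q - 1, by omega⟩
    rw [Nat.add_sub_cancel, show (q + 1) ^ 2 = (q + 1 + 1) * q + 1 by ring, Nat.add_sub_cancel]
  have : q ≤ q ^ 2 := Nat.le_self_pow two_ne_zero q
  have hg : (X ^ (q ^ 2 - q) + C c * (X ^ (q - 1) + 1) ^ (q + 1)).natDegree ≤ q ^ 2 - 1 := by
    refine natDegree_add_le_of_degree_le ((natDegree_X_pow_le _).trans (by omega))
      ((natDegree_C_mul_le _ _).trans (hsq ▸ natDegree_pow_le_of_le _ ?_))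
    exact natDegree_add_le_of_degree_le (natDegree_X_pow_le _) (by simp)
  have hX : (X ^ q + X : F[X]).natDegree ≤ q :=
    natDegree_add_le_of_degree_le (natDegree_X_pow_le _) (natDegree_X_le.trans hq)
  refine natDegree_comp_le.trans ((Nat.mul_le_mul hg hX).trans_eq ?_)
  rw [Nat.sub_one_mul, ← pow_succ]

section CharTwo

variable [CharP F 2] {k q : ℕ}

theorem eval_fiberPoly_eq_zero (hq : q = 2 ^ k) {θ z : F} (hθ : θ ^ q ≠ θ)
    (hz : z ^ q * (θ ^ q ^ 2 + θ) = θ ^ q + θ) :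
    (fiberPoly q ((z ^ (q + 1) + z) ^ q)).eval θ = 0 := by
  have hq₀ : 0 < q := hq ▸ by positivity
  have hsr : (θ ^ q + θ) ^ q + (θ ^ q + θ) = θ ^ q ^ 2 + θ := by
    rw [add_pow_of_eq_two_pow hq, ← pow_mul, ← sq]
    linear_combination θ ^ q * CharTwo.two_eq_zero (R := F)
  rw [eval_fiberPoly]
  set s := θ ^ q + θ
  rw [← hsr] at hz
  have hs : s ≠ 0 := by rwa [Ne, CharTwo.add_eq_zero]
  have hr : (s ^ q + s) ^ q = s ^ q ^ 2 + s ^ q := by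
    rw [add_pow_of_eq_two_pow hq, ← pow_mul, ← sq]
  have hψ : (z ^ (q + 1) + z) ^ q = (z ^ q) ^ (q + 1) + z ^ q := by
    rw [add_pow_of_eq_two_pow hq, ← pow_mul, ← pow_mul, mul_comm]
  have hs₁ : (s ^ (q - 1) + 1) * s = s ^ q + s := by
    rw [add_mul, one_mul, ← pow_succ, Nat.sub_one_add_one hq₀.ne']
  have hexp : s ^ (q ^ 2 - q) * s ^ (q + 1) = s ^ q ^ 2 * s := by
    have : q ≤ q ^ 2 := Nat.le_self_pow two_ne_zero q
    rw [← pow_add, ← pow_succ]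
    congr 1
    omega
  have hψr : ((z ^ q) ^ (q + 1) + z ^ q) * (s ^ q + s) ^ (q + 1) =
      s ^ (q + 1) + s * (s ^ q + s) ^ q := by
    rw [add_mul, ← mul_pow, hz, pow_succ' (s ^ q + s), ← mul_assoc, hz]
  refine mul_right_cancel₀ (pow_ne_zero (q + 1) hs) ?_
  rw [add_mul, hexp, hψ, mul_assoc, ← mul_pow, hs₁, hψr, hr, zero_mul]
  linear_combination (s ^ q ^ 2 * s + s ^ (q + 1)) * CharTwo.two_eq_zero (R := F)

theorem card_filter_pow_succ_add_eq_le [DecidableEq F] (hq : q = 2 ^ k) (hq₁ : 1 < q) {a : F}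
    (ha : a ≠ 0) (S : Finset F) (z : F → F)
    (hz : ∀ θ ∈ S, θ ^ q ≠ θ ∧ z θ ^ q * (θ ^ q ^ 2 + θ) = θ ^ q + θ) :
    #{θ ∈ S | z θ ^ (q + 1) + z θ = a} ≤ q ^ 3 - q := by
  have hp : fiberPoly q (a ^ q) ≠ 0 := fun h =>
    pow_ne_zero q ha (by simpa [h] using (eval_zero_fiberPoly hq₁ (a ^ q)).symm)
  refine (card_le_degree_of_subset_roots fun θ hθ => ?_).trans
    (natDegree_fiberPoly_le (by omega) (a ^ q))
  simp only [Finset.mem_val, Finset.mem_filter] at hθ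
  rw [mem_roots hp, IsRoot, ← hθ.2]
  exact eval_fiberPoly_eq_zero hq (hz θ hθ.1).1 (hz θ hθ.1).2

end CharTwo

noncomputable def zeroParam (q n : ℕ) (θ : F) : F :=
  ((θ ^ q + θ) / (θ ^ q ^ 2 + θ)) ^ q ^ (n - 1)

theorem zeroParam_pow_mul [CharP F 2] [Fintype F] {q n : ℕ} (hcard : Fintype.card F = q ^ n)
    (hn : n ≠ 0) {θ : F} (hθ : θ ^ q ^ 2 ≠ θ) :
    zeroParam q n θ ^ q * (θ ^ q ^ 2 + θ) = θ ^ q + θ := by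
  rw [zeroParam, ← pow_mul, ← pow_succ, Nat.sub_one_add_one hn, ← hcard, FiniteField.pow_card,
    div_mul_cancel₀]
  rwa [Ne, CharTwo.add_eq_zero]

theorem degBound_le_card_B_eq_zero [CharP F 2] [Fintype F] [DecidableEq F] {k q n : ℕ}
    (hq : q = 2 ^ k) (hq₁ : 1 < q) (hodd : Odd n) (hcard : Fintype.card F = q ^ n) :
    degBound q n ≤ #{x : F | B k x n = 0} := by
  set Z : Finset F := {x | B k x n = 0}
  set S : Finset F := {θ | θ ^ q ≠ θ}
  have hn : n ≠ 0 := hodd.pos.ne'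
  have hFq (θ : F) : θ ^ q ^ n = θ := hcard ▸ FiniteField.pow_card θ
  have hS (θ) (hθ : θ ∈ S) :
      θ ^ q ≠ θ ∧ zeroParam q n θ ^ q * (θ ^ q ^ 2 + θ) = θ ^ q + θ := by
    have hθ : θ ^ q ≠ θ := (mem_filter.mp hθ).2
    exact ⟨hθ, zeroParam_pow_mul hcard hn (pow_pow_two_ne_self_of_odd hodd (hFq θ) hθ)⟩
  have hmaps (θ) (hθ : θ ∈ S) : zeroParam q n θ ^ (q + 1) + zeroParam q n θ ∈ Z :=
    mem_filter.mpr
      ⟨mem_univ _, B_eq_zero_of_pow_mul_eq hq hn (hS θ hθ).1 (hFq θ) (hS θ hθ).2⟩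
  have hfiber (a) (ha : a ∈ Z) :
      #{θ ∈ S | zeroParam q n θ ^ (q + 1) + zeroParam q n θ = a} ≤ q ^ 3 - q := by
    refine card_filter_pow_succ_add_eq_le hq hq₁ (fun h => ?_) S _ hS
    simp [Z, h, B_zero] at ha
  have hSZ : #S ≤ (q ^ 3 - q) * #Z := card_le_mul_card_image_of_maps_to hmaps _ hfiber
  have hmul : (q ^ 3 - q) * degBound q n ≤ (q ^ 3 - q) * #Z :=
    calc (q ^ 3 - q) * degBound q n = Fintype.card F - q := by
          rw [hcard, pow_three_sub_mul_degBound_of_odd hodd]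
      _ ≤ #S := card_sub_le_card_pow_ne_self hq₁
      _ ≤ (q ^ 3 - q) * #Z := hSZ
  exact Nat.le_of_mul_le_mul_left hmul (Nat.sub_pos_of_lt (lt_self_pow₀ hq₁ (by norm_num)))

end

theorem stmt2_general (n k : ℕ) (hodd : Odd n)
    (F : Type*) [Field F] [Fintype F] (hF : Fintype.card F = 2 ^ (n * k)) :
    Nat.card {x : F // B k x n = 0} = (2 ^ ((n - 1) * k) - 1) / (2 ^ (2 * k) - 1) := by
  classical
  have : CharP F 2 := charP_of_card_eq_prime_pow hF
  have hcard : Fintype.card F = (2 ^ k) ^ n := by rw [hF, ← pow_mul, mul_comm]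
  have hq₁ : 1 < 2 ^ k := by
    refine lt_of_pow_lt_pow_left₀ n (Nat.zero_le _) ?_
    rw [one_pow, ← hcard]
    exact Fintype.one_lt_card
  have hdiv : (2 ^ ((n - 1) * k) - 1) / (2 ^ (2 * k) - 1) = degBound (2 ^ k) n := by
    rw [pow_mul', pow_mul' 2 2 k]
    exact Nat.div_eq_of_eq_mul_left (Nat.sub_pos_of_lt (one_lt_pow₀ hq₁ two_ne_zero))
      (degBound_mul_of_odd _ hodd).symm
  rw [Nat.card_eq_fintype_card, Fintype.card_subtype, hdiv]
  exact (card_B_eq_zero_le k n).antisymm (degBound_le_card_B_eq_zero rfl hq₁ hodd hcard)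

theorem stmt2 (n k : ℕ) (hn : 1 < n) (hodd : Odd n) (hk : 1 ≤ k)
    (F : Type*) [Field F] [Fintype F] (hF : Fintype.card F = 2 ^ (n * k)) :
    Nat.card {x : F // B k x n = 0} = (2 ^ ((n - 1) * k) - 1) / (2 ^ (2 * k) - 1) :=
  stmt2_general n k hodd F hF
end

section
/- Define Z_n(x) = B_{n+1}(x) + x · B_{n-1}(x)^{2^k} over GF(2^{nk}). Then for every v in GF(2^{nk}), Z_n(v)^{2^k} = Z_n(v); in particular Z_n(v) lies in the subfield GF(2^k). -/
open Finset

/-- `Z_n(x) = B_{n+1}(x) + x * B_{n-1}(x)^{2^k}`. -/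
def Z {F : Type*} [Field F] (n k : ℕ) (x : F) : F :=
  B k x (n + 1) + x * (B k x (n - 1)) ^ (2 ^ k)

lemma B_succ {F : Type*} [Field F] (k : ℕ) (x : F) (i : ℕ) :
    B k x (i + 3) = B k x (i + 2) + x ^ (2 ^ k) ^ (i + 1) * B k x (i + 1) := by
  rw [B, ← pow_mul, mul_comm k (i+1)]

lemma B_three {F : Type*} [Field F] (k : ℕ) (x : F) :
    B k x 3 = 1 + x ^ (2 ^ k) := by
  have := B_succ k x 0
  simpa [B] using this

lemma B_frob {F : Type*} [Field F] [CharP F 2] (k : ℕ) (x : F) :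
    ∀ i, B k x (i + 3) =
      (B k x (i + 2)) ^ (2 ^ k) + x ^ (2 ^ k) * ((B k x (i + 1)) ^ (2 ^ k)) ^ (2 ^ k)
  | 0 => by
      rw [B_three]
      simp [B]
  | 1 => by
      rw [B_succ k x 1, B_three]
      show 1 + x ^ 2 ^ k + x ^ (2 ^ k) ^ 2 * B k x 2 =
        (1 + x ^ 2 ^ k) ^ 2 ^ k + x ^ 2 ^ k * ((B k x 2) ^ 2 ^ k) ^ 2 ^ k
      simp only [B, add_pow_char_pow, one_pow, mul_one, ← pow_mul, ← pow_succ]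
      ring
  | (i + 2) => by
      have e1 := B_succ k x i
      have h1 := B_frob k x i
      have h2 := B_frob k x (i + 1)
      conv_lhs => rw [B_succ k x (i + 2), h1, h2, e1]
      conv_rhs => rw [B_succ k x (i + 1), e1]
      simp only [add_pow_char_pow, mul_pow, ← pow_mul, ← pow_succ]
      ring

theorem stmt4 (n k : ℕ) (hn : 2 ≤ n) (hk : 1 ≤ k)
    (F : Type*) [Field F] [Fintype F] (hF : Fintype.card F = 2 ^ (n * k)) :
    ∀ v : F, (Z n k v) ^ (2 ^ k) = Z n k v := by
  have hchar : CharP F 2 := by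
    obtain ⟨p, hp⟩ := CharP.exists F
    obtain ⟨m, hpp, hcard⟩ := @FiniteField.card F _ _ p hp
    have hdvd : p ∣ 2 ^ (n * k) := by
      rw [← hF, hcard]; exact dvd_pow_self p m.2.ne'
    have : p = 2 := by
      have h2 := hpp.dvd_of_dvd_pow hdvd
      exact (Nat.prime_dvd_prime_iff_eq hpp Nat.prime_two).mp h2
    exact this ▸ hp
  intro v
  obtain ⟨m, rfl⟩ : ∃ m, n = m + 2 := ⟨n - 2, by omega⟩
  have hcardpow : v ^ ((2 : ℕ) ^ k) ^ (m + 2) = v := by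
    have he : ((2 : ℕ) ^ k) ^ (m + 2) = 2 ^ ((m + 2) * k) := by
      rw [← pow_mul, mul_comm]
    rw [he, ← hF]
    exact FiniteField.pow_card v
  have hfr := B_frob k v m
  rw [← pow_mul] at hfr
  have hs := B_succ k v m
  have hsq : (B k v (m + 3)) ^ (2 ^ k) =
      (B k v (m + 2)) ^ (2 ^ k) + v * (B k v (m + 1)) ^ (2 ^ k) := by
    rw [hs, add_pow_char_pow, mul_pow, ← pow_mul, ← pow_succ, hcardpow]
  have hZ : Z (m + 2) k v = B k v (m + 3) + v * (B k v (m + 1)) ^ (2 ^ k) := rfl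
  rw [hZ, add_pow_char_pow, mul_pow, ← pow_mul, hsq, hfr]
  ring
end

section
/- Let a ∈ GF(2^{nk}) and c ∈ GF(2^k), and suppose Z_n(a) ≠ 0, where Z_n(x) = B_{n+1}(x) + x B_{n-1}(x)^{2^k}. Then V_a = c · B_n(a)/Z_n(a) is a zero of the affine polynomial A_a(x) = a^{2^k} x^{2^{2k}} + x^{2^k} + a x + c. -/
open Finset

section Aux

variable {F : Type*} [Field F]

lemma B_succ3 (k : ℕ) (a : F) (i : ℕ) :
    B k a (i + 3) = B k a (i + 2) + a ^ (2 ^ ((i + 1) * k)) * B k a (i + 1) := by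
  rw [B]

lemma pow_pow_two (y : F) (r s : ℕ) : (y ^ (2 ^ r)) ^ (2 ^ s) = y ^ (2 ^ (r + s)) := by
  rw [← pow_mul, ← pow_add]

lemma frob2 [CharP F 2] (y z : F) (m : ℕ) :
    (y + z) ^ (2 ^ m) = y ^ (2 ^ m) + z ^ (2 ^ m) := by
  haveI : Fact (Nat.Prime 2) := ⟨Nat.prime_two⟩
  exact add_pow_char_pow ..

lemma two_zero [CharP F 2] : (2 : F) = 0 := by
  exact_mod_cast CharP.cast_eq_zero F 2

/-- Key identity: `B_{m+3} = B_{m+2}^q + a^q * B_{m+1}^{q^2}` with `q = 2^k`. -/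
lemma lemI [CharP F 2] (k : ℕ) (a : F) :
    ∀ m : ℕ, B k a (m + 3) =
      (B k a (m + 2)) ^ (2 ^ k) + a ^ (2 ^ k) * (B k a (m + 1)) ^ (2 ^ (2 * k)) := by
  intro m
  induction m using Nat.twoStepInduction with
  | zero =>
    have e : B k a (0 + 3) = 1 + a ^ (2 ^ ((0 + 1) * k)) * 1 := B_succ3 k a 0
    rw [e, show B k a (0 + 2) = (1 : F) from rfl, show B k a (0 + 1) = (1 : F) from rfl,
      show (0 + 1) * k = k by ring]
    ring
  | one =>
    have e1 : B k a (1 + 3) = B k a 3 + a ^ (2 ^ ((1 + 1) * k)) * 1 := B_succ3 k a 1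
    have e2 : B k a 3 = 1 + a ^ (2 ^ ((0 + 1) * k)) * 1 := B_succ3 k a 0
    have e3 : B k a (1 + 2) = 1 + a ^ (2 ^ ((0 + 1) * k)) * 1 := B_succ3 k a 0
    rw [e1, e2, show B k a (1 + 1) = (1 : F) from rfl, one_pow, mul_one, mul_one, mul_one,
      frob2, pow_pow_two a, show (0 + 1) * k + k = (1 + 1) * k by ring]
    ring
  | more m ih ih1 =>
    have r1 : B k a (m + 2 + 3) = B k a (m + 1 + 3) + a ^ (2 ^ ((m + 3) * k)) * B k a (m + 3) :=
      B_succ3 k a (m + 2)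
    have ih1' : B k a (m + 1 + 3)
        = (B k a (m + 3)) ^ (2 ^ k) + a ^ (2 ^ k) * (B k a (m + 2)) ^ (2 ^ (2 * k)) := ih1
    have r2 : B k a (m + 2 + 2) = B k a (m + 3) + a ^ (2 ^ ((m + 2) * k)) * B k a (m + 2) :=
      B_succ3 k a (m + 1)
    have r3 : B k a (m + 2 + 1) = B k a (m + 2) + a ^ (2 ^ ((m + 1) * k)) * B k a (m + 1) :=
      B_succ3 k a m
    have r2q : (B k a (m + 2 + 2)) ^ (2 ^ k)
        = (B k a (m + 3)) ^ (2 ^ k) + a ^ (2 ^ ((m + 3) * k)) * (B k a (m + 2)) ^ (2 ^ k) := by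
      rw [r2, frob2, mul_pow, pow_pow_two a, show (m + 2) * k + k = (m + 3) * k by ring]
    have r3q : (B k a (m + 2 + 1)) ^ (2 ^ (2 * k))
        = (B k a (m + 2)) ^ (2 ^ (2 * k))
          + a ^ (2 ^ ((m + 3) * k)) * (B k a (m + 1)) ^ (2 ^ (2 * k)) := by
      rw [r3, frob2, mul_pow, pow_pow_two a, show (m + 1) * k + 2 * k = (m + 3) * k by ring]
    linear_combination r1 + ih1' + a ^ (2 ^ ((m + 3) * k)) * ih - r2q - a ^ (2 ^ k) * r3q

end Aux

theorem stmt5 (n k : ℕ) (hn : 2 ≤ n) (hk : 1 ≤ k)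
    (F : Type*) [Field F] [Fintype F] (hF : Fintype.card F = 2 ^ (n * k))
    (a c : F) (hc : c ^ (2 ^ k) = c) (hZ : Z n k a ≠ 0) :
    a ^ (2 ^ k) * (c * B k a n / Z n k a) ^ (2 ^ (2 * k)) +
        (c * B k a n / Z n k a) ^ (2 ^ k) + a * (c * B k a n / Z n k a) + c = 0 := by
  -- the field has characteristic 2
  haveI char2 : CharP F 2 := by
    obtain ⟨p, hp⟩ := CharP.exists F
    haveI := hp
    have hpp : p.Prime := CharP.char_is_prime F p
    obtain ⟨m, -, hcard⟩ := FiniteField.card F p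
    have hdvd : p ∣ 2 ^ (n * k) := by
      rw [← hF, hcard]
      exact dvd_pow_self p m.2.ne'
    have hp2 : p = 2 := by
      rcases (Nat.Prime.dvd_of_dvd_pow hpp hdvd) with h
      exact (Nat.prime_dvd_prime_iff_eq hpp Nat.prime_two).mp h
    rwa [hp2] at hp
  have ha : a ^ (2 ^ (n * k)) = a := by
    rw [← hF]; exact FiniteField.pow_card a
  have htwo : (2 : F) = 0 := two_zero
  -- write n = m + 2
  obtain ⟨m, rfl⟩ : ∃ m, n = m + 2 := ⟨n - 2, by omega⟩
  -- the main identity : G(n) = 0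
  have key : a ^ (2 ^ k) * (B k a (m + 2)) ^ (2 ^ (2 * k)) + (B k a (m + 2)) ^ (2 ^ k)
      + a * B k a (m + 2) + (B k a (m + 3) + a * (B k a (m + 1)) ^ (2 ^ k)) = 0 := by
    cases m with
    | zero =>
      simp only [B_succ3 k a 0, B, one_pow, mul_one, one_mul]
      linear_combination (a ^ 2 ^ k + 1 + a) * htwo
    | succ j =>
      -- n = j + 3
      have h1 := lemI k a (j + 1)
      have h2 := lemI k a j
      have h3 : B k a (j + 3) + B k a (j + 2) = a ^ (2 ^ ((j + 1) * k)) * B k a (j + 1) := by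
        rw [B_succ3 k a j]; ring_nf; linear_combination (B k a (2 + j)) * htwo
      -- Frobenius of h3 at exponent 2k
      have h4 : (B k a (j + 3)) ^ (2 ^ (2 * k)) + (B k a (j + 2)) ^ (2 ^ (2 * k))
          = a ^ (2 ^ ((j + 3) * k)) * (B k a (j + 1)) ^ (2 ^ (2 * k)) := by
        rw [← frob2, h3, mul_pow, pow_pow_two a]
        congr 2
        ring
      have ha' : a ^ (2 ^ ((j + 3) * k)) = a := by
        have : (j + 3) * k = (j + 1 + 2) * k := by ring
        rw [this]; exact ha
      rw [ha'] at h4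
      show a ^ 2 ^ k * B k a (j + 1 + 2) ^ 2 ^ (2 * k) + B k a (j + 1 + 2) ^ 2 ^ k +
        a * B k a (j + 1 + 2) + (B k a (j + 1 + 3) + a * B k a (j + 1 + 1) ^ 2 ^ k) = 0
      linear_combination h1 + a ^ (2 ^ k) * h4 + a * h2 +
        (a ^ 2 ^ k * B k a (j + 2) ^ 2 ^ (2 * k) + B k a (j + 3) ^ 2 ^ k + a * B k a (j + 2)
          + a * a ^ 2 ^ k * B k a (j + 1) ^ 2 ^ (2 * k) - a * B k a (j + 1 + 1)
          + a * B k a (j + 1 + 1) ^ 2 ^ k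
          - a ^ 2 ^ k * B k a (j + 1 + 1) ^ 2 ^ (2 * k)) * htwo
  -- Z is fixed by Frobenius
  have hZq : (Z (m + 2) k a) ^ (2 ^ k) = Z (m + 2) k a := by
    show (B k a (m + 3) + a * (B k a (m + 2 - 1)) ^ (2 ^ k)) ^ (2 ^ k) = _
    have hm1 : m + 2 - 1 = m + 1 := rfl
    rw [hm1]
    have h1 := lemI k a m
    have h3 : B k a (m + 3) + B k a (m + 2) = a ^ (2 ^ ((m + 1) * k)) * B k a (m + 1) := by
      rw [B_succ3 k a m]; ring_nf; linear_combination (B k a (2 + m)) * htwo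
    have h4 : (B k a (m + 3)) ^ (2 ^ k) + (B k a (m + 2)) ^ (2 ^ k)
        = a ^ (2 ^ ((m + 2) * k)) * (B k a (m + 1)) ^ (2 ^ k) := by
      rw [← frob2, h3, mul_pow, pow_pow_two a]
      congr 2
      ring
    have ha' : a ^ (2 ^ ((m + 2) * k)) = a := ha
    rw [ha'] at h4
    show (B k a (m + 3) + a * (B k a (m + 1)) ^ (2 ^ k)) ^ (2 ^ k)
      = B k a (m + 3) + a * (B k a (m + 1)) ^ (2 ^ k)
    rw [frob2, mul_pow, pow_pow_two (B k a (m + 1)) k k, show k + k = 2 * k by ring]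
    linear_combination h4 - h1 - (B k a (m + 2) ^ 2 ^ k) * htwo
  -- now assemble
  set b := B k a (m + 2) with hb
  set z := Z (m + 2) k a with hz
  have hzdef : z = B k a (m + 3) + a * (B k a (m + 1)) ^ (2 ^ k) := rfl
  have hV2 : (c * b / z) ^ (2 ^ k) = c * b ^ (2 ^ k) / z := by
    rw [div_pow, mul_pow, hc, hZq]
  have hV4 : (c * b / z) ^ (2 ^ (2 * k)) = c * b ^ (2 ^ (2 * k)) / z := by
    have : (2 : ℕ) ^ (2 * k) = 2 ^ k * 2 ^ k := by rw [← pow_add, two_mul]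
    rw [this, pow_mul, hV2, div_pow, mul_pow, hc, hZq, ← pow_mul, ← pow_add]
  have keyz : a ^ (2 ^ k) * b ^ (2 ^ (2 * k)) + b ^ (2 ^ k) + a * b + z = 0 := by
    rw [hzdef]; exact key
  rw [hV2, hV4]
  field_simp
  linear_combination c * keyz
end

section
/- For every v in GF(2^{nk}), Tr^{nk}_k(B_n(v) + Z_n(v)) = 0, where Tr^{nk}_k denotes the trace from GF(2^{nk}) to GF(2^k), B_n is defined by the recursion B_1 = B_2 = 1, B_{i+2}(x) = B_{i+1}(x) + x^{2^{ik}} B_i(x), and Z_n(x) = B_{n+1}(x) + x B_{n-1}(x)^{2^k}. -/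
open Finset

/-!
In characteristic 2 the recursion gives `B_n + Z_n = t + t^{2^k}` with
`t = v^{2^{(n-1)k}} B_{n-1}(v)`, using `v^{2^{nk}} = v`; and the relative trace of
`t^{2^k} - t` telescopes to `t^{2^{nk}} - t = 0`.
-/

theorem sum_range_pow_sub_self_pow {R : Type*} [CommRing R] (p : ℕ) [ExpChar R p]
    (k n : ℕ) (t : R) :
    ∑ i ∈ range n, (t ^ p ^ k - t) ^ p ^ (i * k) = t ^ p ^ (n * k) - t := by
  have hstep (i : ℕ) : (t ^ p ^ k - t) ^ p ^ (i * k)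
      = t ^ p ^ ((i + 1) * k) - t ^ p ^ (i * k) := by
    rw [sub_pow_expChar_pow, ← pow_mul, ← pow_add, add_mul, one_mul, add_comm k]
  simp only [hstep]
  simpa using Finset.sum_range_sub (fun i => t ^ p ^ (i * k)) n

theorem B_add_Z_of_charTwo {F : Type*} [Field F] [CharP F 2] (k m : ℕ) (x : F) :
    B k x (m + 2) + Z (m + 2) k x
      = x ^ 2 ^ ((m + 1) * k) * B k x (m + 1) + x * B k x (m + 1) ^ 2 ^ k := by
  have hrec : B k x (m + 3) = B k x (m + 2) + x ^ 2 ^ ((m + 1) * k) * B k x (m + 1) := rfl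
  rw [Z, show m + 2 + 1 = m + 3 from rfl, show m + 2 - 1 = m + 1 from rfl, hrec]
  linear_combination CharTwo.add_self_eq_zero (B k x (m + 2))

theorem stmt6_general (n k : ℕ) (hn : 2 ≤ n)
    (F : Type*) [Field F] [Fintype F] (hF : Fintype.card F = 2 ^ (n * k)) :
    ∀ v : F, ∑ i ∈ Finset.range n, (B k v n + Z n k v) ^ (2 ^ (i * k)) = 0 := by
  have : Fact (Nat.Prime 2) := ⟨Nat.prime_two⟩
  have : CharP F 2 := charP_of_card_eq_prime_pow hF
  have hfrob (a : F) : a ^ 2 ^ (n * k) = a := hF ▸ FiniteField.pow_card a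
  intro v
  obtain ⟨m, rfl⟩ : ∃ m, n = m + 2 := ⟨n - 2, by omega⟩
  set t := v ^ 2 ^ ((m + 1) * k) * B k v (m + 1)
  have hsummand : B k v (m + 2) + Z (m + 2) k v = t ^ 2 ^ k - t := by
    rw [B_add_Z_of_charTwo, CharTwo.sub_eq_add, add_comm, mul_pow, ← pow_mul, ← pow_add,
      show (m + 1) * k + k = (m + 2) * k by ring, hfrob]
  rw [hsummand, sum_range_pow_sub_self_pow, hfrob, sub_self]

theorem stmt6 (n k : ℕ) (hn : 2 ≤ n) (hk : 1 ≤ k)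
    (F : Type*) [Field F] [Fintype F] (hF : Fintype.card F = 2 ^ (n * k)) :
    ∀ v : F, ∑ i ∈ Finset.range n, (B k v n + Z n k v) ^ (2 ^ (i * k)) = 0 :=
  stmt6_general n k hn F hF
end

section
/- Let n ≥ 2, a ∈ GF(2^{nk}), c ∈ GF(2^k) with Z_n(a) ≠ 0, and let V_a = c B_n(a)/Z_n(a). Then the absolute trace Tr_{nk}(V_a) from GF(2^{nk}) to GF(2) equals Tr_k(n·c), where Tr_k is the absolute trace on GF(2^k) and n·c means c added to itself n times (i.e. c if n is odd, 0 if n is even). -/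
open Finset

namespace Stmt7Aux

variable {F : Type*} [Field F] (k : ℕ) (a : F)

/-- Companion solution of the same recurrence with initial values 1, 1, 0. -/
def e : ℕ → F
  | 0 => 1
  | 1 => 1
  | 2 => 0
  | i + 3 => e (i + 2) + a ^ (2 ^ ((i + 1) * k)) * e (i + 1)

/-- Transfer matrices. -/
def N (i : ℕ) : Matrix (Fin 2) (Fin 2) F := !![1, a ^ (2 ^ (i * k)); 1, 0]

/-- `S j m = N (j+m) * ⋯ * N (j+1)`. -/
def S (j : ℕ) : ℕ → Matrix (Fin 2) (Fin 2) F
  | 0 => 1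
  | m + 1 => N k a (j + m + 1) * S j m

variable [CharP F 2]

lemma L1 : ∀ s : ℕ, B k a (s + 2) + e k a (s + 2) = (B k a (s + 1)) ^ 2 ^ k := by
  suffices h : ∀ s : ℕ, (B k a (s + 2) + e k a (s + 2) = (B k a (s + 1)) ^ 2 ^ k) ∧
      (B k a (s + 3) + e k a (s + 3) = (B k a (s + 2)) ^ 2 ^ k) from fun s => (h s).1
  intro s
  induction s with
  | zero =>
    constructor
    · simp [B, e]
    · show B k a (0 + 3) + e k a (0 + 3) = _
      rw [B, e]
      simp only [B, e]
      ring_nf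
      simp [CharTwo.two_eq_zero]
  | succ s ih =>
    refine ⟨ih.2, ?_⟩
    show B k a (s + 1 + 3) + e k a (s + 1 + 3) = _
    rw [B, e]
    have hB3 : (B k a (s + 3)) ^ 2 ^ k
        = (B k a (s + 2)) ^ 2 ^ k + (a ^ 2 ^ ((s + 1) * k)) ^ 2 ^ k * (B k a (s + 1)) ^ 2 ^ k := by
      show (B k a (s + 3)) ^ 2 ^ k = _
      rw [B, add_pow_char_pow, mul_pow]
    have hexp : (a ^ 2 ^ ((s + 1) * k)) ^ 2 ^ k = a ^ 2 ^ ((s + 1 + 1) * k) := by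
      rw [← pow_mul, ← pow_add]
      ring_nf
    rw [hB3, hexp]
    have h1 := ih.1
    have h2 := ih.2
    calc B k a (s + 1 + 2) + a ^ 2 ^ ((s + 1 + 1) * k) * B k a (s + 1 + 1)
          + (e k a (s + 1 + 2) + a ^ 2 ^ ((s + 1 + 1) * k) * e k a (s + 1 + 1))
        = (B k a (s + 3) + e k a (s + 3))
          + a ^ 2 ^ ((s + 1 + 1) * k) * (B k a (s + 2) + e k a (s + 2)) := by ring_nf
      _ = (B k a (s + 2)) ^ 2 ^ k + a ^ 2 ^ ((s + 1 + 1) * k) * (B k a (s + 1)) ^ 2 ^ k := by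
          rw [h1, h2]
      _ = _ := by ring

lemma L2 : ∀ m : ℕ, S k a 0 (m + 1) =
    !![B k a (m + 3) + e k a (m + 3), e k a (m + 3);
       B k a (m + 2) + e k a (m + 2), e k a (m + 2)] := by
  intro m
  induction m with
  | zero =>
    show N k a 1 * 1 = _
    rw [mul_one, N]
    ext i j
    fin_cases i <;> fin_cases j <;>
      simp only [B, e, Matrix.cons_val', Matrix.cons_val_zero, Matrix.cons_val_one,
        Matrix.head_cons, Matrix.head_fin_const, Matrix.empty_val', Matrix.cons_val_fin_one] <;>
      ring_nf <;> simp [CharTwo.two_eq_zero]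
  | succ m ih =>
    have hstep : S k a 0 (m + 1 + 1) = N k a (0 + (m + 1) + 1) * S k a 0 (m + 1) := rfl
    have hidx : (0 + (m + 1) + 1) = m + 2 := by ring
    have hB' : B k a (m + 1 + 3) = B k a (m + 3) + a ^ 2 ^ ((m + 2) * k) * B k a (m + 2) := by
      rw [B]
    have he' : e k a (m + 1 + 3) = e k a (m + 3) + a ^ 2 ^ ((m + 2) * k) * e k a (m + 2) := by
      rw [e]
    rw [hstep, hidx, ih, N, Matrix.mul_fin_two, hB', he']
    ext i j
    fin_cases i <;> fin_cases j <;>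
      simp only [Matrix.cons_val', Matrix.cons_val_zero, Matrix.cons_val_one,
        Matrix.head_cons, Matrix.head_fin_const, Matrix.empty_val', Matrix.cons_val_fin_one] <;>
      ring


section Frob
variable [Fact (Nat.Prime 2)]

/-- The k-fold Frobenius as a ring hom. -/
noncomputable def f : F →+* F :=
  haveI : ExpChar F 2 := ExpChar.prime Nat.prime_two
  iterateFrobenius F 2 k

lemma f_apply (x : F) : f k x = x ^ 2 ^ k := by
  haveI : ExpChar F 2 := ExpChar.prime Nat.prime_two
  exact iterateFrobenius_def 2 k x

lemma N_map (i : ℕ) : (N k a i).map (f k) = N k a (i + 1) := by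
  ext x y
  fin_cases x <;> fin_cases y <;>
    simp [N, Matrix.map_apply, f_apply, map_one, map_zero, ← pow_mul, ← pow_add] <;>
    ring_nf

lemma L5a (j : ℕ) : ∀ m : ℕ, (S k a j m).map (f k) = S k a (j + 1) m := by
  intro m
  induction m with
  | zero => exact Matrix.map_one _ (map_zero _) (map_one _)
  | succ m ih =>
    show ((N k a (j + m + 1) * S k a j m).map (f k)) = N k a (j + 1 + m + 1) * S k a (j + 1) m
    rw [Matrix.map_mul, ih, N_map]
    congr 2
    ring

lemma L5b (j : ℕ) : ∀ m : ℕ, S k a j (m + 1) = S k a (j + 1) m * N k a (j + 1) := by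
  intro m
  induction m with
  | zero =>
    show N k a (j + 0 + 1) * 1 = 1 * N k a (j + 1)
    rw [mul_one, one_mul]
  | succ m ih =>
    show N k a (j + (m + 1) + 1) * S k a j (m + 1) = N k a (j + 1 + m + 1) * S k a (j + 1) m * N k a (j + 1)
    rw [ih, ← mul_assoc]
    congr 3
    ring

end Frob

lemma trace_Z (n : ℕ) (hn : 2 ≤ n) (hper : ∀ x : F, x ^ 2 ^ (n * k) = x) :
    (S k a 0 n).trace = Z n k a := by
  obtain ⟨m, rfl⟩ : ∃ m, n = m + 2 := ⟨n - 2, by omega⟩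
  have hpa : a ^ 2 ^ ((m + 1 + 1) * k) = a := hper a
  rw [L2 k a (m + 1), Matrix.trace_fin_two_of]
  have hB' : B k a (m + 1 + 3) = B k a (m + 3) + a * B k a (m + 2) := by
    rw [B, hpa]
  have he' : e k a (m + 1 + 3) = e k a (m + 3) + a * e k a (m + 2) := by
    rw [e, hpa]
  have hL1 := L1 k a m
  have h2 : (2 : F) = 0 := CharTwo.two_eq_zero
  have hm1 : m + 2 - 1 = m + 1 := rfl
  rw [Z, hm1, hB', he']
  linear_combination a * hL1 + e k a (m + 3) * h2

lemma Zq (n : ℕ) (hn : 2 ≤ n) (hper : ∀ x : F, x ^ 2 ^ (n * k) = x) :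
    (Z n k a) ^ 2 ^ k = Z n k a := by
  haveI : Fact (Nat.Prime 2) := ⟨Nat.prime_two⟩
  rw [← trace_Z k a n hn hper]
  obtain ⟨m, rfl⟩ : ∃ m, n = m + 1 := ⟨n - 1, by omega⟩
  have h1 : (S k a 0 (m + 1)).trace ^ 2 ^ k = ((S k a 0 (m + 1)).map (f k)).trace := by
    rw [Matrix.trace_fin_two, Matrix.trace_fin_two, Matrix.map_apply, Matrix.map_apply,
      f_apply, f_apply, add_pow_char_pow]
  rw [h1, L5a, show S k a (0 + 1) (m + 1) = N k a (0 + 1 + m + 1) * S k a (0 + 1) m from rfl]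
  have hN : N k a (0 + 1 + m + 1) = N k a (0 + 1) := by
    have : a ^ 2 ^ ((0 + 1 + m + 1) * k) = a ^ 2 ^ ((0 + 1) * k) := by
      have h : (0 + 1 + m + 1) * k = (m + 1) * k + k := by ring
      rw [h, pow_add, pow_mul, hper a]
      norm_num
    rw [N, N, this]
  rw [hN, Matrix.trace_mul_comm, ← L5b]

lemma sumB (n : ℕ) (hn : 2 ≤ n) (hper : ∀ x : F, x ^ 2 ^ (n * k) = x) :
    ∑ j ∈ Finset.range n, (B k a n) ^ (2 ^ k) ^ j = (n : F) * Z n k a := by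
  haveI : Fact (Nat.Prime 2) := ⟨Nat.prime_two⟩
  have h2 : (2 : F) = 0 := CharTwo.two_eq_zero
  set w : F := a ^ 2 ^ ((n - 1) * k) * B k a (n - 1) with hw
  have hBZ : B k a n = Z n k a + (w + w ^ 2 ^ k) := by
    obtain ⟨m, rfl⟩ : ∃ m, n = m + 2 := ⟨n - 2, by omega⟩
    have hB' : B k a (m + 3) = B k a (m + 2) + a ^ 2 ^ ((m + 1) * k) * B k a (m + 1) := by
      rw [B]
    have hwq : w ^ 2 ^ k = a * (B k a (m + 1)) ^ 2 ^ k := by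
      rw [hw]
      have : m + 2 - 1 = m + 1 := rfl
      rw [this, mul_pow, ← pow_mul, ← pow_add]
      have : (m + 1) * k + k = (m + 2) * k := by ring
      rw [this, hper a]
    rw [hwq, Z]
    have hm1 : m + 2 - 1 = m + 1 := rfl
    have hm2 : m + 2 + 1 = m + 3 := rfl
    rw [hm1, hm2, hB', hw, hm1]
    linear_combination -(a * (B k a (m + 1)) ^ 2 ^ k + a ^ 2 ^ ((m + 1) * k) * B k a (m + 1)) * h2
  have hZj : ∀ j : ℕ, (Z n k a) ^ (2 ^ k) ^ j = Z n k a := by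
    intro j
    induction j with
    | zero => rw [pow_zero, pow_one]
    | succ j ih => rw [pow_succ, pow_mul, ih, Zq k a n hn hper]
  have hterm : ∀ j : ℕ, (B k a n) ^ (2 ^ k) ^ j
      = Z n k a + (w ^ (2 ^ k) ^ j + w ^ (2 ^ k) ^ (j + 1)) := by
    intro j
    have hsplit : ∀ x y : F, (x + y) ^ (2 ^ k) ^ j = x ^ (2 ^ k) ^ j + y ^ (2 ^ k) ^ j := by
      intro x y
      rw [← pow_mul 2 k j, add_pow_char_pow]
    rw [hBZ, hsplit, hsplit, hZj, ← pow_mul w, ← pow_succ']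
  rw [Finset.sum_congr rfl (fun j _ => hterm j), Finset.sum_add_distrib,
    Finset.sum_const, Finset.card_range, nsmul_eq_mul]
  have htel : ∑ j ∈ Finset.range n, (w ^ (2 ^ k) ^ j + w ^ (2 ^ k) ^ (j + 1)) = 0 := by
    have hstep : ∀ j : ℕ, w ^ (2 ^ k) ^ j + w ^ (2 ^ k) ^ (j + 1)
        = w ^ (2 ^ k) ^ (j + 1) - w ^ (2 ^ k) ^ j := by
      intro j
      rw [sub_eq_add_neg, CharTwo.neg_eq, add_comm]
    rw [Finset.sum_congr rfl (fun j _ => hstep j),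
      Finset.sum_range_sub (fun j => w ^ (2 ^ k) ^ j)]
    have hexp : (2 ^ k) ^ n = 2 ^ (n * k) := by rw [← pow_mul, Nat.mul_comm]
    rw [hexp, hper w, pow_zero, pow_one, sub_self]
  rw [htel, add_zero]


end Stmt7Aux

theorem stmt7 (n k : ℕ) (hn : 2 ≤ n) (hk : 1 ≤ k)
    (F : Type*) [Field F] [Fintype F] (hF : Fintype.card F = 2 ^ (n * k))
    (a c : F) (hc : c ^ (2 ^ k) = c) (hZ : Z n k a ≠ 0) :
    ∑ i ∈ Finset.range (n * k), (c * B k a n / Z n k a) ^ (2 ^ i) =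
      ∑ i ∈ Finset.range k, ((n : F) * c) ^ (2 ^ i) := by
  classical
  -- the characteristic is 2
  haveI hring : CharP F (ringChar F) := ringChar.charP F
  obtain ⟨m, hp, hcard⟩ := FiniteField.card F (ringChar F)
  have hr2 : ringChar F = 2 := by
    have hdvd : ringChar F ∣ 2 ^ (n * k) := by
      rw [← hF, hcard]
      exact dvd_pow_self _ (by exact_mod_cast m.ne_zero)
    have := hp.dvd_of_dvd_pow hdvd
    exact (Nat.prime_dvd_prime_iff_eq hp Nat.prime_two).mp this
  haveI h2 : CharP F 2 := hr2 ▸ hring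
  haveI : Fact (Nat.Prime 2) := ⟨Nat.prime_two⟩
  have hper : ∀ x : F, x ^ 2 ^ (n * k) = x := fun x => by
    rw [← hF]; exact FiniteField.pow_card x
  set V : F := c * B k a n / Z n k a with hV
  have hZq : (Z n k a) ^ 2 ^ k = Z n k a := Stmt7Aux.Zq k a n hn hper
  have hZj : ∀ j : ℕ, (Z n k a) ^ (2 ^ k) ^ j = Z n k a := by
    intro j
    induction j with
    | zero => rw [pow_zero, pow_one]
    | succ j ih => rw [pow_succ, pow_mul, ih, hZq]
  have hcj : ∀ j : ℕ, c ^ (2 ^ k) ^ j = c := by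
    intro j
    induction j with
    | zero => rw [pow_zero, pow_one]
    | succ j ih => rw [pow_succ, pow_mul, ih, hc]
  have hVsum : ∑ j ∈ Finset.range n, V ^ (2 ^ k) ^ j = (n : F) * c := by
    have hVj : ∀ j : ℕ, V ^ (2 ^ k) ^ j = c * (B k a n) ^ (2 ^ k) ^ j / Z n k a := by
      intro j
      rw [hV, div_pow, mul_pow, hcj, hZj]
    rw [Finset.sum_congr rfl fun j _ => hVj j, ← Finset.sum_div, ← Finset.mul_sum,
      Stmt7Aux.sumB k a n hn hper, div_eq_iff hZ]
    ring
  have hre : ∀ M : ℕ, ∑ i ∈ Finset.range (M * k), V ^ 2 ^ i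
      = ∑ j ∈ Finset.range M, ∑ r ∈ Finset.range k, V ^ 2 ^ (j * k + r) := by
    intro M
    induction M with
    | zero => simp
    | succ M ih =>
      have h1 : (M + 1) * k = M * k + k := by ring
      rw [h1, Finset.sum_range_add, ih, Finset.sum_range_succ]
  have hinner : ∀ r : ℕ, ∑ j ∈ Finset.range n, V ^ 2 ^ (j * k + r) = ((n : F) * c) ^ 2 ^ r := by
    intro r
    have h1 : ∀ j : ℕ, V ^ 2 ^ (j * k + r) = (V ^ (2 ^ k) ^ j) ^ 2 ^ r := by
      intro j
      rw [← pow_mul]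
      congr 1
      rw [pow_add, ← pow_mul, Nat.mul_comm k j]
    calc ∑ j ∈ Finset.range n, V ^ 2 ^ (j * k + r)
        = ∑ j ∈ Finset.range n, Stmt7Aux.f r (V ^ (2 ^ k) ^ j) := by
          refine Finset.sum_congr rfl fun j _ => ?_
          rw [h1 j, Stmt7Aux.f_apply]
      _ = Stmt7Aux.f r (∑ j ∈ Finset.range n, V ^ (2 ^ k) ^ j) := (map_sum _ _ _).symm
      _ = ((n : F) * c) ^ 2 ^ r := by rw [hVsum, Stmt7Aux.f_apply]
  rw [hre n, Finset.sum_comm]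
  exact Finset.sum_congr rfl fun r _ => hinner r
end

section
/- Let v ∈ GF(2^{nk}) \ GF(2^k) with n > 2, write v_i = v^{2^{ik}}, and let V = v_0^{2^{2k}+1}/(v_0+v_1)^{2^k+1}. If Tr^{nk}_k(v) ≠ 0 then Tr^{nk}_k( B_{n-1}(V)^{2^k} / B_n(V)^{2^k+1} ) = 0. -/
open Finset

set_option linter.unusedSectionVars false

namespace Stmt8Aux

variable {F : Type*} [Field F]

def w (k : ℕ) (v : F) (j : ℕ) : F := v ^ 2 ^ (j * k)
def c (k : ℕ) (v : F) (j : ℕ) : F := w k v j + w k v (j + 1)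
def T (k : ℕ) (v : F) (m : ℕ) : F := ∑ j ∈ Finset.range m, w k v (j + 1)
def Pw (k : ℕ) (v : F) (a m : ℕ) : F := ∏ j ∈ Finset.range m, w k v (j + a)
def Pc (k : ℕ) (v : F) (a m : ℕ) : F := ∏ j ∈ Finset.range m, c k v (j + a)
def Vv (k : ℕ) (v : F) : F := v ^ (2 ^ (2 * k) + 1) / (v + v ^ 2 ^ k) ^ (2 ^ k + 1)

lemma w_pow (k : ℕ) (v : F) (j m : ℕ) : (w k v j) ^ 2 ^ (m * k) = w k v (j + m) := by
  rw [w, w, ← pow_mul, ← pow_add, add_mul]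

lemma w_pow_q (k : ℕ) (v : F) (j : ℕ) : (w k v j) ^ 2 ^ k = w k v (j + 1) := by
  have := w_pow k v j 1
  rwa [one_mul] at this

variable [CharP F 2]

lemma c_pow (k : ℕ) (v : F) (j m : ℕ) : (c k v j) ^ 2 ^ (m * k) = c k v (j + m) := by
  rw [c, c, add_pow_char_pow, w_pow, w_pow, add_right_comm]

lemma c_pow_q (k : ℕ) (v : F) (j : ℕ) : (c k v j) ^ 2 ^ k = c k v (j + 1) := by
  have := c_pow k v j 1
  rwa [one_mul] at this

lemma Pw_pow_q (k : ℕ) (v : F) (a m : ℕ) : (Pw k v a m) ^ 2 ^ k = Pw k v (a + 1) m := by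
  rw [Pw, Pw, ← Finset.prod_pow]
  refine Finset.prod_congr rfl fun j _ => ?_
  rw [w_pow_q]; rw [add_assoc]

lemma Pc_pow_q (k : ℕ) (v : F) (a m : ℕ) : (Pc k v a m) ^ 2 ^ k = Pc k v (a + 1) m := by
  rw [Pc, Pc, ← Finset.prod_pow]
  refine Finset.prod_congr rfl fun j _ => ?_
  rw [c_pow_q]; rw [add_assoc]

lemma Pw_succ (k : ℕ) (v : F) (a m : ℕ) : Pw k v a (m + 1) = Pw k v a m * w k v (m + a) :=
  Finset.prod_range_succ _ _

lemma Pw_succ' (k : ℕ) (v : F) (a m : ℕ) : Pw k v a (m + 1) = w k v a * Pw k v (a + 1) m := by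
  rw [Pw, Finset.prod_range_succ', zero_add, mul_comm, Pw]
  congr 1
  exact Finset.prod_congr rfl fun j _ => by congr 1; omega

lemma Pc_succ (k : ℕ) (v : F) (a m : ℕ) : Pc k v a (m + 1) = Pc k v a m * c k v (m + a) :=
  Finset.prod_range_succ _ _

lemma Pc_succ' (k : ℕ) (v : F) (a m : ℕ) : Pc k v a (m + 1) = c k v a * Pc k v (a + 1) m := by
  rw [Pc, Finset.prod_range_succ', zero_add, mul_comm, Pc]
  congr 1
  exact Finset.prod_congr rfl fun j _ => by congr 1; omega

lemma T_succ (k : ℕ) (v : F) (m : ℕ) : T k v (m + 1) = T k v m + w k v (m + 1) :=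
  Finset.sum_range_succ _ _

/-- `T m ^ q + w 1 = T (m+1)` -/
lemma T_pow_q (k : ℕ) (v : F) (m : ℕ) : (T k v m) ^ 2 ^ k + w k v 1 = T k v (m + 1) := by
  rw [T, sum_pow_char_pow, T, Finset.sum_range_succ']
  congr 1
  exact Finset.sum_congr rfl fun j _ => by rw [w_pow_q]

/-- key identity for the recurrence -/
lemma V_pow (k : ℕ) (v : F) (hc : ∀ j, c k v j ≠ 0) (m : ℕ) :
    (Vv k v) ^ 2 ^ (m * k) * (c k v m * c k v (m + 1)) = w k v m * w k v (m + 2) := by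
  have h0 : Vv k v * (c k v 0 * c k v 1) = w k v 0 * w k v 2 := by
    have hden : (v + v ^ 2 ^ k) = c k v 0 := by
      rw [c, w, w]; norm_num
    have hpow : (c k v 0) ^ (2 ^ k + 1) = c k v 1 * c k v 0 := by
      rw [pow_add, pow_one, c_pow_q]
    rw [Vv, hden, hpow, div_mul_eq_mul_div, mul_comm (c k v 0) (c k v 1),
      mul_div_assoc, div_self (by exact mul_ne_zero (hc 1) (hc 0)), mul_one]
    rw [pow_add, pow_one, w, w]
    norm_num [mul_comm]
  calc (Vv k v) ^ 2 ^ (m * k) * (c k v m * c k v (m + 1))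
      = (Vv k v * (c k v 0 * c k v 1)) ^ 2 ^ (m * k) := by
        rw [mul_pow, mul_pow, c_pow, c_pow, zero_add, add_comm 1 m]
    _ = (w k v 0 * w k v 2) ^ 2 ^ (m * k) := by rw [h0]
    _ = w k v m * w k v (m + 2) := by
        rw [mul_pow, w_pow, w_pow, zero_add, add_comm 2 m]

/-- closed form: `B_{s+2}(V) * ∏_{j=1}^{s+1} c_j = (∏_{j=2}^{s+1} w_j) * T_{s+2}` -/
lemma closed_form (k : ℕ) (v : F) (hc : ∀ j, c k v j ≠ 0) (s : ℕ) :
    B k (Vv k v) (s + 2) * Pc k v 1 (s + 1) = Pw k v 2 s * T k v (s + 2) := by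
  have h2 : (2 : F) = 0 := CharTwo.two_eq_zero
  induction s using Nat.twoStepInduction with
  | zero =>
    show B k (Vv k v) 2 * Pc k v 1 1 = Pw k v 2 0 * T k v 2
    rw [show B k (Vv k v) 2 = 1 from rfl]
    simp [Pc, Pw, T, Finset.prod_range_one, Finset.sum_range_succ, c]
  | one =>
    have key : Vv k v ^ 2 ^ (1 * k) * (c k v 1 * c k v 2) = w k v 1 * w k v 3 :=
      V_pow k v hc 1
    have hB : B k (Vv k v) 3 = 1 + Vv k v ^ 2 ^ (1 * k) := by
      show B k (Vv k v) 2 + Vv k v ^ 2 ^ (1 * k) * B k (Vv k v) 1 = 1 + Vv k v ^ 2 ^ (1 * k)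
      rw [show B k (Vv k v) 2 = 1 from rfl, show B k (Vv k v) 1 = 1 from rfl, mul_one]
    have hPc : Pc k v 1 2 = c k v 1 * c k v 2 := by
      show Pc k v 1 (1 + 1) = _
      rw [Pc_succ, Pc, Finset.prod_range_one]
    have hPw : Pw k v 2 1 = w k v 2 := by rw [Pw, Finset.prod_range_one]
    have hT : T k v 3 = w k v 1 + w k v 2 + w k v 3 := by
      show T k v (2 + 1) = _
      rw [T_succ, show T k v 2 = T k v (1 + 1) from rfl, T_succ, T, Finset.sum_range_one]
    show B k (Vv k v) 3 * Pc k v 1 2 = Pw k v 2 1 * T k v 3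
    rw [show c k v 1 = w k v 1 + w k v 2 from rfl,
      show c k v 2 = w k v 2 + w k v 3 from rfl] at key
    rw [hB, hPc, hPw, hT, show c k v 1 = w k v 1 + w k v 2 from rfl,
      show c k v 2 = w k v 2 + w k v 3 from rfl]
    linear_combination key + (w k v 1 * w k v 3) * h2
  | more s ih1 ih2 =>
    have key : Vv k v ^ 2 ^ ((s + 2) * k) * (c k v (s + 2) * c k v (s + 3))
        = w k v (s + 2) * w k v (s + 4) := V_pow k v hc (s + 2)
    have hrec : B k (Vv k v) (s + 4) =
        B k (Vv k v) (s + 3) + Vv k v ^ 2 ^ ((s + 2) * k) * B k (Vv k v) (s + 2) := rfl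
    have e3 : Pc k v 1 (s + 3) = Pc k v 1 (s + 2) * c k v (s + 3) := Pc_succ k v 1 (s + 2)
    have e3' : Pc k v 1 (s + 2) = Pc k v 1 (s + 1) * c k v (s + 2) := Pc_succ k v 1 (s + 1)
    have e4 : Pw k v 2 (s + 2) = Pw k v 2 (s + 1) * w k v (s + 3) := Pw_succ k v 2 (s + 1)
    have e4' : Pw k v 2 (s + 1) = Pw k v 2 s * w k v (s + 2) := Pw_succ k v 2 s
    have e5 : T k v (s + 4) = T k v (s + 3) + w k v (s + 4) := T_succ k v (s + 3)
    have e5' : T k v (s + 3) = T k v (s + 2) + w k v (s + 3) := T_succ k v (s + 2)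
    have e6 : c k v (s + 2) = w k v (s + 2) + w k v (s + 3) := rfl
    have e7 : c k v (s + 3) = w k v (s + 3) + w k v (s + 4) := rfl
    rw [e3', e5', e6, e4'] at ih2
    rw [e6, e7] at key
    show B k (Vv k v) (s + 4) * Pc k v 1 (s + 3) = Pw k v 2 (s + 2) * T k v (s + 4)
    rw [hrec, e3, e3', e4, e4', e5, e5', e6, e7]
    linear_combination (w k v (s + 3) + w k v (s + 4)) * ih2
      + (B k (Vv k v) (s + 2) * Pc k v 1 (s + 1)) * key
      + (w k v (s + 2) * w k v (s + 4)) * ih1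
      + (Pw k v 2 s * w k v (s + 2) * T k v (s + 2) * w k v (s + 4)) * h2

lemma Pc_ne_zero (k : ℕ) (v : F) (hc : ∀ j, c k v j ≠ 0) (a m : ℕ) : Pc k v a m ≠ 0 := by
  rw [Pc]; exact Finset.prod_ne_zero_iff.mpr fun j _ => hc _

lemma main_eq (k s : ℕ) (v : F) (hc : ∀ j, c k v j ≠ 0)
    (hA : w k v (s + 3) = w k v 0) (hB' : w k v (s + 4) = w k v 1) :
    B k (Vv k v) (s + 2) ^ 2 ^ k * Pw k v 0 (s + 3) * T k v (s + 3) ^ 2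
      = B k (Vv k v) (s + 3) ^ (2 ^ k + 1) * Pc k v 0 (s + 3)
        * (w k v 1 * T k v (s + 3) + w k v 1 ^ 2) := by
  have h2 : (2 : F) = 0 := CharTwo.two_eq_zero
  have hTfix : T k v (s + 3) ^ 2 ^ k = T k v (s + 3) := by
    have h := T_pow_q k v (s + 3)
    have h5 : T k v (s + 4) = T k v (s + 3) + w k v (s + 4) := T_succ k v (s + 3)
    rw [h5, hB'] at h
    exact add_right_cancel h
  have tq : T k v (s + 2) ^ 2 ^ k = T k v (s + 3) + w k v 1 := by
    have h := T_pow_q k v (s + 2)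
    linear_combination h - (w k v 1) * h2
  have cf1 := closed_form k v hc s
  have cf2 := closed_form k v hc (s + 1)
  have e1 : B k (Vv k v) (s + 2) ^ 2 ^ k * Pc k v 2 (s + 1)
      = Pw k v 3 s * (T k v (s + 3) + w k v 1) := by
    have h := congrArg (· ^ (2 ^ k)) cf1
    simp only [mul_pow, Pc_pow_q, Pw_pow_q, tq] at h
    exact h
  have hcs3 : c k v (s + 3) = c k v 0 := by
    show w k v (s + 3) + w k v (s + 4) = c k v 0
    rw [hA, hB']; rfl
  have e2 : B k (Vv k v) (s + 3) * (c k v 1 * Pc k v 2 (s + 1))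
      = w k v 2 * Pw k v 3 s * T k v (s + 3) := by
    have d3 : Pc k v 1 (s + 2) = c k v 1 * Pc k v 2 (s + 1) := by
      simpa using Pc_succ' k v 1 (s + 1)
    have d4 : Pw k v 2 (s + 1) = w k v 2 * Pw k v 3 s := by
      simpa using Pw_succ' k v 2 s
    rw [d3, d4] at cf2; exact cf2
  have e3 : B k (Vv k v) (s + 3) ^ 2 ^ k * (Pc k v 2 (s + 1) * c k v 0)
      = Pw k v 3 s * w k v 0 * T k v (s + 3) := by
    have h := congrArg (· ^ (2 ^ k)) cf2
    simp only [mul_pow, Pc_pow_q, Pw_pow_q, hTfix] at h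
    have d5 : Pc k v 2 (s + 2) = Pc k v 2 (s + 1) * c k v 0 := by
      have := Pc_succ k v 2 (s + 1)
      rw [show s + 1 + 2 = s + 3 from rfl, hcs3] at this; exact this
    have d6 : Pw k v 3 (s + 1) = Pw k v 3 s * w k v 0 := by
      have := Pw_succ k v 3 s
      rw [show s + 3 = s + 3 from rfl] at this
      rw [this, hA]
    rw [d5, d6] at h
    exact h
  have d1 : Pw k v 0 (s + 3) = w k v 0 * (w k v 1 * (w k v 2 * Pw k v 3 s)) := by
    rw [Pw_succ' k v 0 (s + 2), Pw_succ' k v 1 (s + 1), Pw_succ' k v 2 s]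
  have d2 : Pc k v 0 (s + 3) = c k v 0 * (c k v 1 * Pc k v 2 (s + 1)) := by
    rw [Pc_succ' k v 0 (s + 2), Pc_succ' k v 1 (s + 1)]
  rw [d1, d2, pow_add, pow_one]
  refine mul_right_cancel₀ (Pc_ne_zero k v hc 2 (s + 1)) ?_
  linear_combination
    (w k v 0 * w k v 1 * w k v 2 * Pw k v 3 s * T k v (s + 3) ^ 2) * e1
    - ((w k v 1 * T k v (s + 3) + w k v 1 ^ 2) * c k v 0 * Pc k v 2 (s + 1)
        * B k (Vv k v) (s + 3) ^ 2 ^ k) * e2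
    - ((w k v 1 * T k v (s + 3) + w k v 1 ^ 2) * w k v 2 * Pw k v 3 s
        * T k v (s + 3)) * e3

lemma fix_pow (k : ℕ) (a : F) (hq : a ^ 2 ^ k = a) : ∀ i, a ^ 2 ^ (i * k) = a := by
  intro i
  induction i with
  | zero => norm_num
  | succ i ih =>
    rw [show (i + 1) * k = i * k + k from by ring, pow_add, pow_mul, ih, hq]

end Stmt8Aux


set_option maxHeartbeats 1000000 in
open Stmt8Aux in
theorem stmt8 (n k : ℕ) (hn : 2 < n) (hk : 1 ≤ k)
    (F : Type*) [Field F] [Fintype F] (hF : Fintype.card F = 2 ^ (n * k))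
    (v : F) (hv : v ^ (2 ^ k) ≠ v)
    (htr : ∑ i ∈ Finset.range n, v ^ (2 ^ (i * k)) ≠ 0) :
    ∑ i ∈ Finset.range n,
        ((B k (v ^ (2 ^ (2 * k) + 1) / (v + v ^ (2 ^ k)) ^ (2 ^ k + 1)) (n - 1)) ^ (2 ^ k) /
          (B k (v ^ (2 ^ (2 * k) + 1) / (v + v ^ (2 ^ k)) ^ (2 ^ k + 1)) n) ^ (2 ^ k + 1)) ^
          (2 ^ (i * k)) = 0 := by
  -- the characteristic is 2
  have hprime : Nat.Prime (ringChar F) := CharP.char_is_prime F (ringChar F)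
  obtain ⟨m, hmp, hm⟩ := FiniteField.card F (ringChar F)
  have hr2 : ringChar F = 2 := by
    have hdvd : ringChar F ∣ 2 ^ (n * k) := by
      rw [← hF, hm]
      exact dvd_pow_self _ (by positivity)
    exact (Nat.prime_dvd_prime_iff_eq hprime Nat.prime_two).mp
      (Nat.Prime.dvd_of_dvd_pow hprime hdvd)
  haveI hchar : CharP F 2 := hr2 ▸ ringChar.charP F
  have h2 : (2 : F) = 0 := CharTwo.two_eq_zero
  -- basic nonvanishing
  have hv0 : v ≠ 0 := by
    intro h
    exact hv (by rw [h, zero_pow (by positivity)])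
  have hw0 : w k v 0 = v := by rw [w]; norm_num
  have hw1 : w k v 1 = v ^ 2 ^ k := by rw [w]; norm_num
  have hc0 : c k v 0 ≠ 0 := by
    intro h
    rw [c, hw0, hw1] at h
    have : v ^ 2 ^ k = -v := eq_neg_of_add_eq_zero_right h
    rw [CharTwo.neg_eq] at this
    exact hv this
  have hc : ∀ j, c k v j ≠ 0 := by
    intro j
    have hcj := c_pow k v 0 j
    rw [zero_add] at hcj
    rw [← hcj]
    exact pow_ne_zero _ hc0
  have hwj : ∀ j, w k v j ≠ 0 := fun j => pow_ne_zero _ hv0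
  -- periodicity
  have hper : ∀ j, w k v (j + n) = w k v j := by
    intro j
    calc w k v (j + n) = (w k v j) ^ 2 ^ (n * k) := (w_pow k v j n).symm
      _ = (w k v j) ^ Fintype.card F := by rw [hF]
      _ = w k v j := FiniteField.pow_card _
  obtain ⟨s, rfl⟩ : ∃ s, n = s + 3 := ⟨n - 3, by omega⟩
  have hA : w k v (s + 3) = w k v 0 := by
    have := hper 0
    rwa [zero_add] at this
  have hB' : w k v (s + 4) = w k v 1 := by
    have := hper 1
    rwa [show 1 + (s + 3) = s + 4 from by omega] at this
  -- the trace is T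
  have htr' : ∑ i ∈ Finset.range (s + 3), w k v i ≠ 0 := htr
  have hTsum : T k v (s + 3) = ∑ i ∈ Finset.range (s + 3), w k v i := by
    have key : T k v (s + 3) + w k v 0
        = (∑ i ∈ Finset.range (s + 3), w k v i) + w k v 0 := by
      rw [T, ← Finset.sum_range_succ' (w k v) (s + 3), Finset.sum_range_succ, hA]
    exact add_right_cancel key
  have hT : T k v (s + 3) ≠ 0 := by rw [hTsum]; exact htr'
  -- B_n(V) is nonzero
  have hPwne : ∀ a m, Pw k v a m ≠ 0 := by
    intro a m
    rw [Pw]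
    exact Finset.prod_ne_zero_iff.mpr fun j _ => hwj _
  have hBn : B k (Vv k v) (s + 3) ≠ 0 := by
    intro h
    have cf := closed_form k v hc (s + 1)
    rw [show s + 1 + 2 = s + 3 from rfl, h, zero_mul] at cf
    exact mul_ne_zero (hPwne 2 (s + 1)) hT cf.symm
  -- fixedness under Frobenius
  have hcs3 : c k v (s + 3) = c k v 0 := by
    show w k v (s + 3) + w k v (s + 4) = c k v 0
    rw [hA, hB']; rfl
  have hPcfix : Pc k v 0 (s + 3) ^ 2 ^ k = Pc k v 0 (s + 3) := by
    rw [Pc_pow_q]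
    have d1 : Pc k v 0 (s + 3) = c k v 0 * Pc k v 1 (s + 2) := by
      simpa using Pc_succ' k v 0 (s + 2)
    have d2 : Pc k v 1 (s + 3) = Pc k v 1 (s + 2) * c k v (s + 3) :=
      Pc_succ k v 1 (s + 2)
    rw [show (0 : ℕ) + 1 = 1 from rfl, d2, hcs3, d1, mul_comm]
  have hPwfix : Pw k v 0 (s + 3) ^ 2 ^ k = Pw k v 0 (s + 3) := by
    rw [Pw_pow_q]
    have d1 : Pw k v 0 (s + 3) = w k v 0 * Pw k v 1 (s + 2) := by
      simpa using Pw_succ' k v 0 (s + 2)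
    have d2 : Pw k v 1 (s + 3) = Pw k v 1 (s + 2) * w k v (s + 3) :=
      Pw_succ k v 1 (s + 2)
    rw [show (0 : ℕ) + 1 = 1 from rfl, d2, hA, d1, mul_comm]
  have hTfix : T k v (s + 3) ^ 2 ^ k = T k v (s + 3) := by
    have h := T_pow_q k v (s + 3)
    have h5 : T k v (s + 4) = T k v (s + 3) + w k v (s + 4) := T_succ k v (s + 3)
    rw [h5, hB'] at h
    exact add_right_cancel h
  -- the main rational identity
  have hDne : Pw k v 0 (s + 3) * T k v (s + 3) ^ 2 ≠ 0 :=
    mul_ne_zero (hPwne 0 (s + 3)) (pow_ne_zero _ hT)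
  have hX : B k (Vv k v) (s + 2) ^ 2 ^ k / B k (Vv k v) (s + 3) ^ (2 ^ k + 1)
      = (Pc k v 0 (s + 3) * (w k v 1 * T k v (s + 3) + w k v 1 ^ 2))
        / (Pw k v 0 (s + 3) * T k v (s + 3) ^ 2) := by
    rw [div_eq_div_iff (pow_ne_zero _ hBn) hDne]
    linear_combination main_eq k s v hc hA hB'
  have hsum : ∀ i, (B k (Vv k v) (s + 2) ^ 2 ^ k
        / B k (Vv k v) (s + 3) ^ (2 ^ k + 1)) ^ 2 ^ (i * k)
      = (Pc k v 0 (s + 3) * (w k v (1 + i) * T k v (s + 3) + w k v (1 + i) ^ 2))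
        / (Pw k v 0 (s + 3) * T k v (s + 3) ^ 2) := by
    intro i
    rw [hX, div_pow, mul_pow, mul_pow,
      add_pow_char_pow _ _ 2 (i * k), mul_pow,
      fix_pow k _ hPcfix i, fix_pow k _ hPwfix i,
      pow_right_comm (T k v (s + 3)) 2 (2 ^ (i * k)),
      fix_pow k _ hTfix i,
      pow_right_comm (w k v 1) 2 (2 ^ (i * k)),
      w_pow k v 1 i]
  have hsum0 : ∑ i ∈ Finset.range (s + 3),
      (w k v (1 + i) * T k v (s + 3) + w k v (1 + i) ^ 2) = 0 := by
    rw [Finset.sum_add_distrib, ← Finset.sum_mul, ← CharTwo.sum_sq]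
    have hTs : ∑ i ∈ Finset.range (s + 3), w k v (1 + i) = T k v (s + 3) := by
      rw [T]
      exact Finset.sum_congr rfl fun j _ => by rw [add_comm]
    rw [hTs]
    linear_combination (T k v (s + 3)) ^ 2 * h2
  calc ∑ i ∈ Finset.range (s + 3),
        ((B k (v ^ (2 ^ (2 * k) + 1) / (v + v ^ (2 ^ k)) ^ (2 ^ k + 1)) (s + 3 - 1)) ^ (2 ^ k) /
          (B k (v ^ (2 ^ (2 * k) + 1) / (v + v ^ (2 ^ k)) ^ (2 ^ k + 1)) (s + 3)) ^ (2 ^ k + 1)) ^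
          (2 ^ (i * k))
      = ∑ i ∈ Finset.range (s + 3),
        (Pc k v 0 (s + 3) * (w k v (1 + i) * T k v (s + 3) + w k v (1 + i) ^ 2))
        / (Pw k v 0 (s + 3) * T k v (s + 3) ^ 2) :=
        Finset.sum_congr rfl fun i _ => hsum i
    _ = (∑ i ∈ Finset.range (s + 3),
        Pc k v 0 (s + 3) * (w k v (1 + i) * T k v (s + 3) + w k v (1 + i) ^ 2))
        / (Pw k v 0 (s + 3) * T k v (s + 3) ^ 2) := (Finset.sum_div _ _ _).symm
    _ = (Pc k v 0 (s + 3) * ∑ i ∈ Finset.range (s + 3),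
        (w k v (1 + i) * T k v (s + 3) + w k v (1 + i) ^ 2))
        / (Pw k v 0 (s + 3) * T k v (s + 3) ^ 2) := by rw [Finset.mul_sum]
    _ = 0 := by rw [hsum0, mul_zero, zero_div]
end

section
/- Let b ∈ GF(2^{nk})* and consider f(x) = x^{2^k+1} + b² x + b² and g(x) = b^{2^k} x^{2^{2k}-1} + b² x^{2^k-1} + b over GF(2^{nk}). Then exactly one of the following holds: (i) f has 0 or 2 zeros in GF(2^{nk}) and g has 0 zeros; (ii) f has exactly 1 zero and g has exactly 2^k - 1 zeros; (iii) f has exactly 2^k + 1 zeros and g has exactly 2^{2k} - 1 zeros. -/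
/-!
Substituting `y = b x^(2^k-1)` turns `b g(x)` into `f(y)`, so the zeros of `g` are the fibres of
`x ↦ b x^(2^k-1)` over the zeros of `f`, and each fibre has `0` or `2^k - 1` points. If `y` is a zero
of `f`, then `y + w⁻¹` is another zero exactly when `T_y w = 1` for the additive map
`T_y w = (y^(2^k) + b²) w^(2^k) + y w`. Hence `f` has `1 + #T_y⁻¹(1)` zeros, where `#T_y⁻¹(1)` is
`0` or `#ker T_y = 1 + #{w | w^(2^k-1) = y/b}`, and it is `0` only if `T_y` is not injective.
Comparing these counts at all the zeros of `f` leaves the three cases.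
-/

open Finset

section RootCounting

variable {F : Type*} [Field F] [Fintype F] [DecidableEq F]

theorem FiniteField.exists_isPrimitiveRoot_of_dvd_card_sub_one {m : ℕ}
    (hm : m ∣ Fintype.card F - 1) : ∃ ζ : F, IsPrimitiveRoot ζ m := by
  obtain ⟨d, hd⟩ := hm
  obtain ⟨g, hg⟩ := IsCyclic.exists_ofOrder_eq_natCard (α := Fˣ)
  have hgen : IsPrimitiveRoot (g : F) (Fintype.card F - 1) := by
    rw [IsPrimitiveRoot.coe_units_iff, ← Fintype.card_units, ← Nat.card_eq_fintype_card, ← hg]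
    exact IsPrimitiveRoot.orderOf g
  have hpos : 0 < Fintype.card F - 1 := Nat.sub_pos_of_lt Fintype.one_lt_card
  exact ⟨(g : F) ^ d, hgen.pow hpos (by rw [hd, mul_comm])⟩

theorem FiniteField.card_pow_eq_eq_zero_or_eq {m : ℕ} (hm : m ∣ Fintype.card F - 1)
    {a : F} (ha : a ≠ 0) : #{x | x ^ m = a} = 0 ∨ #{x | x ^ m = a} = m := by
  obtain ⟨ζ, hζ⟩ := exists_isPrimitiveRoot_of_dvd_card_sub_one hm
  have hm0 : 0 < m := Nat.pos_of_dvd_of_pos hm (Nat.sub_pos_of_lt Fintype.one_lt_card)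
  have hroots : ({x | x ^ m = a} : Finset F) = (Polynomial.nthRoots m a).toFinset := by
    ext x
    simp [Polynomial.mem_nthRoots hm0]
  rw [hroots, Multiset.toFinset_card_of_nodup (hζ.nthRoots_nodup ha), hζ.card_nthRoots]
  split_ifs <;> simp

theorem FiniteField.card_pow_eq_pow_char (p : ℕ) [Fact p.Prime] [CharP F p] (m : ℕ) (a : F) :
    #{x | x ^ m = a ^ p} = #{x | x ^ m = a} := by
  refine (card_equiv (frobeniusEquiv F p).toEquiv fun x => ?_).symm
  simp only [mem_filter, mem_univ, true_and, RingEquiv.toEquiv_eq_coe, EquivLike.coe_coe,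
    frobeniusEquiv_apply]
  rw [← map_pow, ← frobenius_def p a, (frobenius_inj F p).eq_iff]

end RootCounting

namespace AddMonoidHom

theorem card_fiber_eq_zero_or_eq_card_ker {G M : Type*} [AddGroup G] [Fintype G] [AddMonoid M]
    [DecidableEq M] (f : G →+ M) (x : M) :
    #{g | f g = x} = 0 ∨ #{g | f g = x} = #{g | f g = 0} := by
  by_cases hx : x ∈ Set.range f
  · exact Or.inr (card_fiber_eq_of_mem_range f hx ⟨0, map_zero f⟩)
  · left
    rw [card_eq_zero, filter_eq_empty_iff]
    exact fun g _ hg => hx ⟨g, hg⟩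

theorem card_fiber_eq_one_of_card_ker_eq_one {G : Type*} [AddGroup G] [Fintype G] [DecidableEq G]
    (f : G →+ G) (hker : #{g | f g = 0} = 1) (x : G) : #{g | f g = x} = 1 := by
  have hinj : Function.Injective f := by
    refine (injective_iff_map_eq_zero f).mpr fun g hg => ?_
    exact card_le_one.mp hker.le g (by simpa using hg) 0 (by simp)
  rw [← hker]
  exact card_fiber_eq_of_mem_range f (Finite.injective_iff_surjective.mp hinj x) ⟨0, map_zero f⟩

end AddMonoidHom

theorem card_eq_trichotomy {α : Type*} (R : Finset α) (M : α → ℕ) (m : ℕ)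
    (hM : ∀ y ∈ R, M y = 0 ∨ M y = m)
    (hR : ∀ y ∈ R, (#R = 1 ∧ M y = m) ∨ #R = M y + 2) :
    ((#R = 0 ∨ #R = 2) ∧ ∑ y ∈ R, M y = 0) ∨ (#R = 1 ∧ ∑ y ∈ R, M y = m) ∨
      (#R = m + 2 ∧ ∑ y ∈ R, M y = (m + 2) * m) := by
  rcases R.eq_empty_or_nonempty with rfl | ⟨y, hy⟩
  · simp
  rcases hR y hy with ⟨hone, hMy⟩ | htwo
  · obtain ⟨z, rfl⟩ := card_eq_one.mp hone
    rw [mem_singleton] at hy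
    subst hy
    simp [hMy]
  · have hconst : ∀ z ∈ R, M z = M y := fun z hz => by
      rcases hR z hz with ⟨hone, -⟩ | h <;> omega
    rw [sum_congr rfl hconst, sum_const, smul_eq_mul]
    rcases hM y hy with h | h <;> rw [h] at htwo ⊢ <;> simp [htwo]

theorem card_roots_eq_sum_card_pow_eq {F : Type*} [Field F] [Fintype F] [DecidableEq F]
    {b : F} (hb : b ≠ 0) (q : ℕ) :
    #{x | b ^ q * x ^ (q ^ 2 - 1) + b ^ 2 * x ^ (q - 1) + b = 0} =
      ∑ y ∈ {y | y ^ (q + 1) + b ^ 2 * y + b ^ 2 = 0}, #{x | x ^ (q - 1) = y / b} := by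
  have hsubst : ∀ x : F, (b * x ^ (q - 1)) ^ (q + 1) + b ^ 2 * (b * x ^ (q - 1)) + b ^ 2 =
      b * (b ^ q * x ^ (q ^ 2 - 1) + b ^ 2 * x ^ (q - 1) + b) := fun x => by
    have hexp : (q - 1) * (q + 1) = q ^ 2 - 1 := by
      rw [mul_comm, ← Nat.sq_sub_sq, one_pow]
    rw [mul_pow, ← pow_mul, hexp]
    ring
  rw [card_eq_sum_card_fiberwise (f := fun x => b * x ^ (q - 1))
    (t := {y | y ^ (q + 1) + b ^ 2 * y + b ^ 2 = 0}) fun x hx => by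
      simp only [coe_filter, mem_univ, true_and] at hx ⊢
      exact (hsubst x).trans (by rw [hx, mul_zero])]
  refine sum_congr rfl fun y hy => ?_
  congr 1
  ext x
  simp only [mem_filter, mem_univ, true_and] at hy ⊢
  rw [eq_div_iff hb, mul_comm (x ^ (q - 1))]
  constructor
  · exact And.right
  · intro hx
    refine ⟨?_, hx⟩
    have := hsubst x
    rw [hx, hy] at this
    exact (mul_eq_zero.mp this.symm).resolve_left hb

section CharTwo

variable {F : Type*} [Field F] {k : ℕ} {b y : F}

theorem ne_zero_of_root (hb : b ≠ 0) (hy : y ^ (2 ^ k + 1) + b ^ 2 * y + b ^ 2 = 0) : y ≠ 0 := by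
  rintro rfl
  simp [hb] at hy

variable [CharP F 2]

variable (k) in
def linearizedBinomial (c d : F) : F →+ F :=
  AddMonoidHom.mk' (fun w => c * w ^ 2 ^ k + d * w) fun v w => by
    simp only [add_pow_char_pow]
    ring

variable (k) in
@[simp]
theorem linearizedBinomial_apply (c d w : F) :
    linearizedBinomial k c d w = c * w ^ 2 ^ k + d * w := rfl

theorem root_add_inv_eq (hy : y ^ (2 ^ k + 1) + b ^ 2 * y + b ^ 2 = 0) (w : F) :
    (y + w⁻¹) ^ (2 ^ k + 1) + b ^ 2 * (y + w⁻¹) + b ^ 2 =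
      w⁻¹ ^ (2 ^ k + 1) * (linearizedBinomial k (y ^ 2 ^ k + b ^ 2) y w + 1) := by
  rcases eq_or_ne w 0 with rfl | hw
  · simpa using hy
  have hinv : w⁻¹ * w = 1 := inv_mul_cancel₀ hw
  have hinv_pow : (w⁻¹ * w) ^ 2 ^ k = 1 := by rw [hinv, one_pow]
  rw [pow_succ, add_pow_char_pow, linearizedBinomial_apply]
  linear_combination hy - (y ^ 2 ^ k + b ^ 2) * w⁻¹ * hinv_pow - y * w⁻¹ ^ 2 ^ k * hinv

variable [Fintype F] [DecidableEq F]

theorem card_roots_eq_card_fiber_add_one (hy : y ^ (2 ^ k + 1) + b ^ 2 * y + b ^ 2 = 0) :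
    #{x | x ^ (2 ^ k + 1) + b ^ 2 * x + b ^ 2 = 0} =
      #{w | linearizedBinomial k (y ^ 2 ^ k + b ^ 2) y w = 1} + 1 := by
  set T := linearizedBinomial k (y ^ 2 ^ k + b ^ 2) y
  have hroots : ({x | x ^ (2 ^ k + 1) + b ^ 2 * x + b ^ 2 = 0} : Finset F) =
      insert y (({w | T w = 1} : Finset F).image fun w => y + w⁻¹) := by
    ext x
    simp only [mem_insert, mem_image, mem_filter, mem_univ, true_and]
    constructor
    · intro hx
      rcases eq_or_ne x y with rfl | hxy
      · exact Or.inl rfl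
      have hval := root_add_inv_eq hy (x - y)⁻¹
      rw [inv_inv, add_sub_cancel, hx, eq_comm, mul_eq_zero] at hval
      exact Or.inr ⟨(x - y)⁻¹, CharTwo.add_eq_zero.mp
        (hval.resolve_left (pow_ne_zero _ (sub_ne_zero.mpr hxy))), by simp⟩
    · rintro (rfl | ⟨w, hw, rfl⟩)
      · exact hy
      · rw [root_add_inv_eq hy, hw, CharTwo.add_self_eq_zero, mul_zero]
  have hy_notMem : y ∉ ({w | T w = 1} : Finset F).image fun w => y + w⁻¹ := by
    simp only [mem_image, mem_filter, mem_univ, true_and, add_eq_left, inv_eq_zero, not_exists,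
      not_and]
    rintro w hw rfl
    simp at hw
  rw [hroots, card_insert_of_notMem hy_notMem,
    card_image_of_injective _ fun v w h => inv_injective (add_left_cancel h)]

theorem card_ker_linearizedBinomial (hk : k ≠ 0) (hb : b ≠ 0)
    (hy : y ^ (2 ^ k + 1) + b ^ 2 * y + b ^ 2 = 0) :
    #{w | linearizedBinomial k (y ^ 2 ^ k + b ^ 2) y w = 0} =
      #{w | w ^ (2 ^ k - 1) = y / b} + 1 := by
  set c := y ^ 2 ^ k + b ^ 2
  have hy0 : y ≠ 0 := ne_zero_of_root hb hy
  have hyc : y * c = b ^ 2 := CharTwo.add_eq_zero.mp (by linear_combination hy)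
  have hc : c ≠ 0 := right_ne_zero_of_mul (hyc ▸ pow_ne_zero 2 hb)
  -- a nonzero `w` is in the kernel iff `w ^ (2 ^ k - 1) = y / c`, and `y / c` is a square
  have hsq : (y / b) ^ 2 = y / c := by
    rw [div_pow, ← hyc]
    field_simp
  have hpow : ∀ w : F, w ^ 2 ^ k = w ^ (2 ^ k - 1) * w := fun w => by
    rw [← pow_succ, Nat.sub_add_cancel Nat.one_le_two_pow]
  have hker : ({w | linearizedBinomial k c y w = 0} : Finset F) =
      insert 0 ({w | w ^ (2 ^ k - 1) = (y / b) ^ 2} : Finset F) := by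
    ext w
    simp only [mem_insert, mem_filter, mem_univ, true_and, linearizedBinomial_apply, hpow, hsq]
    rcases eq_or_ne w 0 with rfl | hw
    · simp
    rw [show c * (w ^ (2 ^ k - 1) * w) + y * w = (c * w ^ (2 ^ k - 1) + y) * w by ring,
      mul_eq_zero, or_iff_left hw, CharTwo.add_eq_zero, eq_div_iff hc, mul_comm]
    simp [hw]
  have hzero : (0 : F) ∉ ({w | w ^ (2 ^ k - 1) = (y / b) ^ 2} : Finset F) := by
    simp only [mem_filter, mem_univ, true_and,
      zero_pow (Nat.sub_ne_zero_of_lt (Nat.one_lt_two_pow hk))]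
    exact (pow_ne_zero 2 (div_ne_zero hy0 hb)).symm
  rw [hker, card_insert_of_notMem hzero, FiniteField.card_pow_eq_pow_char 2]

theorem card_roots_eq_one_or_eq_add_two (hk : k ≠ 0) (hdvd : 2 ^ k - 1 ∣ Fintype.card F - 1)
    (hb : b ≠ 0) (hy : y ^ (2 ^ k + 1) + b ^ 2 * y + b ^ 2 = 0) :
    (#{x | x ^ (2 ^ k + 1) + b ^ 2 * x + b ^ 2 = 0} = 1 ∧
        #{x | x ^ (2 ^ k - 1) = y / b} = 2 ^ k - 1) ∨
      #{x | x ^ (2 ^ k + 1) + b ^ 2 * x + b ^ 2 = 0} = #{x | x ^ (2 ^ k - 1) = y / b} + 2 := by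
  set T := linearizedBinomial k (y ^ 2 ^ k + b ^ 2) y
  rw [card_roots_eq_card_fiber_add_one hy]
  rcases T.card_fiber_eq_zero_or_eq_card_ker 1 with hempty | hfiber
  · have hker : #{w | T w = 0} ≠ 1 := fun h => by
      simpa [hempty] using T.card_fiber_eq_one_of_card_ker_eq_one h 1
    rw [card_ker_linearizedBinomial hk hb hy] at hker
    refine Or.inl ⟨by rw [hempty], ?_⟩
    exact (FiniteField.card_pow_eq_eq_zero_or_eq hdvd
      (div_ne_zero (ne_zero_of_root hb hy) hb)).resolve_left (by omega)
  · rw [hfiber, card_ker_linearizedBinomial hk hb hy]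
    exact Or.inr rfl

end CharTwo

theorem stmt9_general (n k : ℕ) (hk : 1 ≤ k)
    (F : Type*) [Field F] [Fintype F] (hF : Fintype.card F = 2 ^ (n * k))
    (b : F) (hb : b ≠ 0) :
    ((Nat.card {x : F // x ^ (2 ^ k + 1) + b ^ 2 * x + b ^ 2 = 0} = 0 ∨
        Nat.card {x : F // x ^ (2 ^ k + 1) + b ^ 2 * x + b ^ 2 = 0} = 2) ∧
      Nat.card {x : F // b ^ (2 ^ k) * x ^ (2 ^ (2 * k) - 1) +
        b ^ 2 * x ^ (2 ^ k - 1) + b = 0} = 0) ∨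
    (Nat.card {x : F // x ^ (2 ^ k + 1) + b ^ 2 * x + b ^ 2 = 0} = 1 ∧
      Nat.card {x : F // b ^ (2 ^ k) * x ^ (2 ^ (2 * k) - 1) +
        b ^ 2 * x ^ (2 ^ k - 1) + b = 0} = 2 ^ k - 1) ∨
    (Nat.card {x : F // x ^ (2 ^ k + 1) + b ^ 2 * x + b ^ 2 = 0} = 2 ^ k + 1 ∧
      Nat.card {x : F // b ^ (2 ^ k) * x ^ (2 ^ (2 * k) - 1) +
        b ^ 2 * x ^ (2 ^ k - 1) + b = 0} = 2 ^ (2 * k) - 1) := by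
  classical
  have hnk : n * k ≠ 0 := fun h => by
    simpa [hF, h] using (Fintype.one_lt_card : 1 < Fintype.card F)
  have : CharP F 2 := ringChar.of_eq <| FiniteField.even_card_iff_char_two.mpr <| by
    rw [hF, Nat.pow_mod]
    simp [hnk]
  have hdvd : 2 ^ k - 1 ∣ Fintype.card F - 1 := by
    simpa [hF, pow_mul'] using Nat.sub_dvd_pow_sub_pow (2 ^ k) 1 n
  have hsq : 2 ^ (2 * k) = (2 ^ k) ^ 2 := by rw [pow_mul']
  have hq : 2 ^ k - 1 + 2 = 2 ^ k + 1 := by have := Nat.one_le_two_pow (n := k); omega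
  have hq2 : (2 ^ k + 1) * (2 ^ k - 1) = (2 ^ k) ^ 2 - 1 := by
    rw [← one_pow 2, Nat.sq_sub_sq, one_pow]
  simp only [Nat.card_eq_fintype_card, Fintype.card_subtype, hsq,
    card_roots_eq_sum_card_pow_eq hb]
  have hcases := card_eq_trichotomy _ _ _
    (fun y hy => FiniteField.card_pow_eq_eq_zero_or_eq hdvd
      (div_ne_zero (ne_zero_of_root hb (mem_filter.mp hy).2) hb))
    (fun y hy => card_roots_eq_one_or_eq_add_two (by omega) hdvd hb (mem_filter.mp hy).2)
  rwa [hq, hq2] at hcases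

theorem stmt9 (n k : ℕ) (hn : 1 ≤ n) (hk : 1 ≤ k)
    (F : Type*) [Field F] [Fintype F] (hF : Fintype.card F = 2 ^ (n * k))
    (b : F) (hb : b ≠ 0) :
    ((Nat.card {x : F // x ^ (2 ^ k + 1) + b ^ 2 * x + b ^ 2 = 0} = 0 ∨
        Nat.card {x : F // x ^ (2 ^ k + 1) + b ^ 2 * x + b ^ 2 = 0} = 2) ∧
      Nat.card {x : F // b ^ (2 ^ k) * x ^ (2 ^ (2 * k) - 1) +
        b ^ 2 * x ^ (2 ^ k - 1) + b = 0} = 0) ∨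
    (Nat.card {x : F // x ^ (2 ^ k + 1) + b ^ 2 * x + b ^ 2 = 0} = 1 ∧
      Nat.card {x : F // b ^ (2 ^ k) * x ^ (2 ^ (2 * k) - 1) +
        b ^ 2 * x ^ (2 ^ k - 1) + b = 0} = 2 ^ k - 1) ∨
    (Nat.card {x : F // x ^ (2 ^ k + 1) + b ^ 2 * x + b ^ 2 = 0} = 2 ^ k + 1 ∧
      Nat.card {x : F // b ^ (2 ^ k) * x ^ (2 ^ (2 * k) - 1) +
        b ^ 2 * x ^ (2 ^ k - 1) + b = 0} = 2 ^ (2 * k) - 1) :=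
  stmt9_general n k hk F hF b hb
end

section
/- Let n > 2 be odd, k ≥ 1, c ∈ GF(2^k) with absolute trace Tr_k(c) = 1, and a ∈ GF(2^{nk}). Then the polynomial A_a(x) = a^{2^k} x^{2^{2k}} + x^{2^k} + a x + c has at least one zero in GF(2^{nk}). -/
open Finset Polynomial

set_option linter.unusedSectionVars false
set_option maxHeartbeats 1000000

section AuxStmt11
variable {F : Type*} [Field F] [Fintype F]

private noncomputable def TT (m : ℕ) (z : F) : F := ∑ i ∈ range m, z ^ 2 ^ i
private noncomputable def SS (n k : ℕ) (z : F) : F := ∑ j ∈ range n, z ^ 2 ^ (j * k)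
open Classical in
private noncomputable def EE (m : ℕ) (u : F) : ℤ := if TT m u = 0 then 1 else -1

private lemma ppow (z : F) (i j : ℕ) : (z ^ 2 ^ i) ^ (2:ℕ) ^ j = z ^ 2 ^ (i + j) := by
  rw [← pow_mul, ← pow_add]

variable [CharP F 2]

private lemma fsum (e : ℕ) {ι : Type*} (s : Finset ι) (f : ι → F) :
    (∑ i ∈ s, f i) ^ (2:ℕ) ^ e = ∑ i ∈ s, (f i) ^ (2:ℕ) ^ e := by
  simpa only [iterateFrobenius_def] using map_sum (iterateFrobenius F 2 e) f s

private lemma TT_add (m : ℕ) (x y : F) : TT m (x + y) = TT m x + TT m y := by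
  unfold TT; rw [← Finset.sum_add_distrib]
  exact Finset.sum_congr rfl fun i _ => add_pow_char_pow ..

private lemma TT_zero (m : ℕ) : TT (F := F) m 0 = 0 := by
  unfold TT
  exact Finset.sum_eq_zero fun i _ => zero_pow (Nat.two_pow_pos i).ne'

private lemma TT_sq {m : ℕ} (hfe : ∀ z : F, z ^ (2:ℕ) ^ m = z) (z : F) :
    TT m (z ^ 2) = TT m z := by
  have h : ∀ i : ℕ, (z ^ 2) ^ (2:ℕ) ^ i = z ^ (2:ℕ) ^ (i + 1) := by
    intro i
    rw [show (2:ℕ)^(i+1) = 2 * 2^i by ring, pow_mul]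
  calc TT m (z ^ 2) = ∑ i ∈ range m, z ^ (2:ℕ) ^ (i + 1) := by
        simp only [TT, h]
    _ = TT m z := by
        have h1 : ∑ i ∈ range (m+1), z ^ (2:ℕ) ^ i
            = (∑ i ∈ range m, z ^ (2:ℕ) ^ (i+1)) + z ^ (2:ℕ) ^ 0 := Finset.sum_range_succ' _ m
        have h2 : ∑ i ∈ range (m+1), z ^ (2:ℕ) ^ i
            = (∑ i ∈ range m, z ^ (2:ℕ) ^ i) + z ^ (2:ℕ) ^ m := Finset.sum_range_succ _ m
        have h3 : z ^ (2:ℕ) ^ m = z ^ (2:ℕ) ^ 0 := by rw [hfe, pow_zero, pow_one]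
        rw [h3] at h2
        have := h1.symm.trans h2
        unfold TT
        exact add_right_cancel this

private lemma TT_frob {m : ℕ} (hfe : ∀ z : F, z ^ (2:ℕ) ^ m = z) (e : ℕ) (z : F) :
    TT m (z ^ (2:ℕ) ^ e) = TT m z := by
  induction e with
  | zero => simp
  | succ e ih =>
    have : z ^ (2:ℕ) ^ (e+1) = (z ^ (2:ℕ) ^ e) ^ 2 := by
      rw [← pow_mul]; ring_nf
    rw [this, TT_sq hfe, ih]

private lemma TT_adj {m : ℕ} (hfe : ∀ z : F, z ^ (2:ℕ) ^ m = z)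
    (b z w : F) (i j : ℕ) (hij : i + j = m) :
    TT m (b * z ^ (2:ℕ) ^ i * w) = TT m (b ^ (2:ℕ) ^ j * z * w ^ (2:ℕ) ^ j) := by
  have key : (b ^ (2:ℕ) ^ j * z * w ^ (2:ℕ) ^ j) ^ (2:ℕ) ^ i = b * z ^ (2:ℕ) ^ i * w := by
    rw [mul_pow, mul_pow, ppow, ppow, Nat.add_comm j i, hij, hfe, hfe]
  rw [← key, TT_frob hfe]

private lemma TT_vals {m : ℕ} (hfe : ∀ z : F, z ^ (2:ℕ) ^ m = z) (z : F) :
    TT m z = 0 ∨ TT m z = 1 := by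
  have h : TT m z ^ (2:ℕ) ^ 1 = TT m z := by
    unfold TT
    rw [fsum]
    have hcg : ∀ i ∈ range m, (z ^ (2:ℕ) ^ i) ^ (2:ℕ) ^ 1 = (z ^ (2:ℕ) ^ 1) ^ (2:ℕ) ^ i :=
      fun i _ => by rw [ppow, ppow, Nat.add_comm]
    rw [Finset.sum_congr rfl hcg]
    have h2 := TT_sq hfe z
    unfold TT at h2
    simpa [pow_one] using h2
  rw [pow_one] at h
  have h2 : TT m z * (TT m z - 1) = 0 := by ring_nf; linear_combination h
  rcases mul_eq_zero.mp h2 with h3 | h3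
  · exact Or.inl h3
  · exact Or.inr (sub_eq_zero.mp h3)

private lemma sum_range_mul' {M : Type*} [AddCommMonoid M] (f : ℕ → M) (n k : ℕ) :
    ∑ l ∈ range (n * k), f l = ∑ j ∈ range n, ∑ i ∈ range k, f (j * k + i) := by
  induction n with
  | zero => simp
  | succ n ih =>
    rw [Finset.sum_range_succ, ← ih, show (n+1) * k = n * k + k by ring,
      Finset.sum_range_add]

private lemma TT_eq_SS (n k : ℕ) (z : F) :
    TT (n * k) z = ∑ i ∈ range k, (SS n k z) ^ (2:ℕ) ^ i := by
  unfold TT SS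
  rw [sum_range_mul' (fun l => z ^ 2 ^ l) n k, Finset.sum_comm]
  refine Finset.sum_congr rfl fun i _ => ?_
  rw [fsum]
  exact Finset.sum_congr rfl fun j _ => by rw [ppow]

private lemma SS_add (n k : ℕ) (x y : F) : SS n k (x + y) = SS n k x + SS n k y := by
  unfold SS
  rw [← Finset.sum_add_distrib]
  exact Finset.sum_congr rfl fun j _ => add_pow_char_pow ..

private lemma SS_pow (n k e : ℕ) (z : F) : SS n k (z ^ (2:ℕ) ^ e) = (SS n k z) ^ (2:ℕ) ^ e := by
  unfold SS
  rw [fsum]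
  exact Finset.sum_congr rfl fun j _ => by rw [ppow, ppow, Nat.add_comm]

private lemma SS_shift {n k : ℕ} (hfe : ∀ z : F, z ^ (2:ℕ) ^ (n * k) = z) (z : F) :
    SS n k (z ^ (2:ℕ) ^ k) = SS n k z := by
  unfold SS
  have h0 : ∀ j, (z ^ (2:ℕ) ^ k) ^ (2:ℕ) ^ (j * k) = z ^ (2:ℕ) ^ ((j+1) * k) := by
    intro j; rw [ppow]; ring_nf
  simp only [h0]
  have h1 : ∑ j ∈ range (n+1), z ^ (2:ℕ) ^ (j * k)
      = (∑ j ∈ range n, z ^ (2:ℕ) ^ ((j+1) * k)) + z ^ (2:ℕ) ^ (0 * k) :=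
    Finset.sum_range_succ' _ n
  have h2 : ∑ j ∈ range (n+1), z ^ (2:ℕ) ^ (j * k)
      = (∑ j ∈ range n, z ^ (2:ℕ) ^ (j * k)) + z ^ (2:ℕ) ^ (n * k) :=
    Finset.sum_range_succ _ n
  have h3 : z ^ (2:ℕ) ^ (n * k) = z ^ (2:ℕ) ^ (0 * k) := by
    rw [hfe]; norm_num
  rw [h3] at h2
  exact add_right_cancel (h1.symm.trans h2)

private lemma SS_ker {n k : ℕ} (hfe : ∀ z : F, z ^ (2:ℕ) ^ (n * k) = z)
    (a y : F)
    (hy : a ^ (2:ℕ)^(2*k) * y ^ (2:ℕ)^(2*k) + y ^ (2:ℕ)^k + a ^ (2:ℕ)^k * y = 0) :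
    SS n k y = 0 := by
  set Q : ℕ := 2 ^ k with hQ
  set A : F := a ^ Q with hA
  set Y : F := y ^ Q with hYd
  set w : F := A * (Y * y) with hw
  have htwo : (2 : F) = 0 := by
    have := CharP.cast_eq_zero F 2; exact_mod_cast this
  have hkey : (y * y) ^ Q = w ^ Q + w := by
    have e1 : A ^ Q = a ^ (2:ℕ)^(2*k) := by
      rw [hA, hQ, ppow, two_mul]
    have e2 : Y ^ Q = y ^ (2:ℕ)^(2*k) := by
      rw [hYd, hQ, ppow, two_mul]
    have hMy : A ^ Q * Y ^ Q + Y + A * y = 0 := by rw [e1, e2]; exact hy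
    have hmul : Y * (A ^ Q * Y ^ Q + Y + A * y) = 0 := by rw [hMy, mul_zero]
    have hwQ : w ^ Q = A ^ Q * (Y ^ Q * y ^ Q) := by rw [hw, mul_pow, mul_pow]
    rw [hwQ, ← hYd]
    have hyyQ : (y * y) ^ Q = Y * Y := by rw [mul_pow, ← hYd]
    rw [hyyQ]
    linear_combination hmul - (A ^ Q * (Y ^ Q * Y) + A * (Y * y)) * htwo
  have h2 : SS n k ((y * y) ^ (2:ℕ) ^ k) = 0 := by
    rw [← hQ, hkey, SS_add, SS_shift hfe w]
    linear_combination SS n k w * htwo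
  rw [SS_shift hfe] at h2
  have h3 : (SS n k y) ^ (2:ℕ) ^ 1 = 0 := by
    rw [← SS_pow]
    have hyy : y ^ (2:ℕ) ^ 1 = y * y := by rw [pow_one, sq]
    rw [hyy]; exact h2
  exact pow_eq_zero_iff (Nat.two_pow_pos 1).ne' |>.mp h3

private lemma TT_c {n k : ℕ} (c : F) (hc : c ^ (2:ℕ)^k = c) (y : F)
    (hSy : SS n k y = 0) : TT (n*k) (c*y) = 0 := by
  have hcj : ∀ j : ℕ, c ^ (2:ℕ)^(j*k) = c := by
    intro j; induction j with
    | zero => simp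
    | succ j ih =>
      rw [show (j+1)*k = k + j*k by ring, ← ppow, hc, ih]
  have hS : SS n k (c*y) = c * SS n k y := by
    unfold SS; rw [Finset.mul_sum]
    exact Finset.sum_congr rfl fun j _ => by rw [mul_pow, hcj]
  rw [TT_eq_SS, hS, hSy, mul_zero]
  exact Finset.sum_eq_zero fun i _ => zero_pow (Nat.two_pow_pos i).ne'

private lemma TT_exists_ne {m : ℕ} (hm : 0 < m) (hcard : Fintype.card F = 2 ^ m) :
    ∃ w : F, TT m w ≠ 0 := by
  classical
  by_contra hcon
  push_neg at hcon
  set P : F[X] := ∑ i ∈ range m, (X : F[X]) ^ 2 ^ i with hP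
  have hPc : P.coeff 1 = 1 := by
    rw [hP, Polynomial.finset_sum_coeff]
    rw [Finset.sum_eq_single 0]
    · simp
    · intro i _ hi
      rw [Polynomial.coeff_X_pow]
      have : (1:ℕ) ≠ 2 ^ i := by
        have : 2 ≤ 2 ^ i := Nat.one_lt_two_pow_iff.mpr hi
        omega
      simp [this]
    · intro h; exact absurd (Finset.mem_range.mpr hm) h
  have hPne : P ≠ 0 := fun h => by simp [h] at hPc
  have hdeg : P.natDegree ≤ 2 ^ (m - 1) := by
    apply Polynomial.natDegree_sum_le_of_forall_le
    intro i hi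
    rw [Polynomial.natDegree_X_pow]
    exact Nat.pow_le_pow_right (by norm_num) (by have := Finset.mem_range.mp hi; omega)
  have hroots : ∀ w : F, w ∈ P.roots := by
    intro w
    rw [Polynomial.mem_roots hPne]
    unfold Polynomial.IsRoot
    rw [hP, Polynomial.eval_finset_sum]
    simpa [TT] using hcon w
  have hsub : (Finset.univ : Finset F) ⊆ P.roots.toFinset := fun w _ =>
    Multiset.mem_toFinset.mpr (hroots w)
  have hcard2 : (2:ℕ) ^ m ≤ 2 ^ (m - 1) := by
    calc (2:ℕ) ^ m = Fintype.card F := hcard.symm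
      _ = (Finset.univ : Finset F).card := (Finset.card_univ).symm
      _ ≤ P.roots.toFinset.card := Finset.card_le_card hsub
      _ ≤ Multiset.card P.roots := Multiset.toFinset_card_le _
      _ ≤ P.natDegree := Polynomial.card_roots' P
      _ ≤ 2 ^ (m-1) := hdeg
  have : (2:ℕ) ^ (m-1) < 2 ^ m := Nat.pow_lt_pow_right (by norm_num) (by omega)
  omega

private lemma EE_congr {m : ℕ} {u v : F} (h : TT m u = TT m v) : EE m u = EE m v := by
  unfold EE; rw [h]

private lemma EE_one {m : ℕ} {u : F} (h : TT m u = 0) : EE m u = 1 := by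
  unfold EE; rw [if_pos h]

private lemma EE_add {m : ℕ} (hfe : ∀ z : F, z ^ (2:ℕ) ^ m = z) (u v : F) :
    EE m (u + v) = EE m u * EE m v := by
  have htwo : (1 : F) + 1 = 0 := by
    have := CharP.cast_eq_zero F 2
    have h2 : ((2:ℕ) : F) = 1 + 1 := by norm_num
    rw [h2] at this; exact this
  unfold EE
  rcases TT_vals hfe u with hu | hu <;> rcases TT_vals hfe v with hv | hv <;>
    rw [TT_add, hu, hv] <;> simp [htwo]

open Classical in
private lemma EE_orth {m : ℕ} (hm : 0 < m) (hcard : Fintype.card F = 2 ^ m)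
    (hfe : ∀ z : F, z ^ (2:ℕ) ^ m = z) (u : F) :
    ∑ z : F, EE m (z * u) = if u = 0 then ((2:ℤ) ^ m) else 0 := by
  by_cases hu : u = 0
  · rw [if_pos hu]
    subst hu
    simp only [mul_zero]
    have hone : ∀ z : F, EE m (0 : F) = 1 := fun _ => EE_one (TT_zero m)
    rw [Finset.sum_congr rfl (fun z _ => hone z), Finset.sum_const, Finset.card_univ, hcard]
    push_cast; ring
  · rw [if_neg hu]
    obtain ⟨w, hw⟩ := TT_exists_ne hm hcard
    set z₀ : F := w * u⁻¹ with hz₀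
    have hz₀u : z₀ * u = w := by
      rw [hz₀, mul_assoc, inv_mul_cancel₀ hu, mul_one]
    have hEz₀ : EE m (z₀ * u) = -1 := by
      unfold EE; rw [hz₀u, if_neg hw]
    have hre : ∑ z : F, EE m (z * u) = ∑ z : F, EE m ((z₀ + z) * u) :=
      (Fintype.sum_bijective (z₀ + ·) (Equiv.addLeft z₀).bijective _ _ (fun z => rfl)).symm
    have hstep : ∀ z : F, EE m ((z₀ + z) * u) = -(EE m (z * u)) := by
      intro z
      rw [add_mul, EE_add hfe, hEz₀]; ring
    have hre2 : ∑ z : F, EE m (z * u) = -∑ z : F, EE m (z * u) := by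
      conv_lhs => rw [hre]
      simp only [hstep]
      rw [Finset.sum_neg_distrib]
    omega

end AuxStmt11

theorem stmt11 (n k : ℕ) (hn : 2 < n) (hodd : Odd n) (hk : 1 ≤ k)
    (F : Type*) [Field F] [Fintype F] (hF : Fintype.card F = 2 ^ (n * k))
    (c : F) (hc : c ^ (2 ^ k) = c)
    (htr : ∑ i ∈ Finset.range k, c ^ (2 ^ i) = 1)
    (a : F) :
    ∃ x : F, a ^ (2 ^ k) * x ^ (2 ^ (2 * k)) + x ^ (2 ^ k) + a * x + c = 0 := by
  classical
  set m : ℕ := n * k with hm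
  have h3k : 3 * k ≤ m := by
    rw [hm]; exact Nat.mul_le_mul_right k (by omega)
  have hm0 : 0 < m := by omega
  -- characteristic 2
  have hchar : CharP F 2 := by
    obtain ⟨p, hp⟩ := CharP.exists F
    haveI := hp
    have hprime : p.Prime := CharP.char_is_prime F p
    haveI : Fact p.Prime := ⟨hprime⟩
    obtain ⟨s, -, hcard⟩ := FiniteField.card F p
    have hdvd2 : p ∣ 2 := by
      have hdvd : p ∣ 2 ^ m := by
        rw [← hF, hcard]
        exact dvd_pow_self p (by exact_mod_cast s.ne_zero)
      exact hprime.dvd_of_dvd_pow hdvd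
    have hp2 : p = 2 := (Nat.prime_dvd_prime_iff_eq hprime Nat.prime_two).mp hdvd2
    rwa [hp2] at hp
  haveI := hchar
  have hfe : ∀ z : F, z ^ (2:ℕ) ^ m = z := fun z => by
    rw [← hF]; exact FiniteField.pow_card z
  -- exponents
  set j1 : ℕ := m - k with hj1
  set j2 : ℕ := m - 2*k with hj2
  have hj1e : k + j1 = m := by omega
  have hj2e : 2*k + j2 = m := by omega
  -- the affine map and its adjoint-kernel map
  set Ax : F → F := fun x => a ^ (2:ℕ) ^ k * x ^ (2:ℕ) ^ (2 * k) + x ^ (2:ℕ) ^ k + a * x + c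
    with hAx
  set N : F → F := fun y =>
    (a ^ (2:ℕ) ^ k) ^ (2:ℕ) ^ j2 * y ^ (2:ℕ) ^ j2 + y ^ (2:ℕ) ^ j1 + a * y with hN
  -- adjoint identity
  have hadj : ∀ x y : F, TT m (Ax x * y) = TT m (x * N y + c * y) := by
    intro x y
    have e0 : Ax x * y =
        (a ^ (2:ℕ) ^ k * x ^ (2:ℕ) ^ (2*k) * y + x ^ (2:ℕ) ^ k * y)
          + (a * x * y + c * y) := by rw [hAx]; ring
    have e1 : x * N y + c * y =
        ((a ^ (2:ℕ) ^ k) ^ (2:ℕ) ^ j2 * x * y ^ (2:ℕ) ^ j2 + x * y ^ (2:ℕ) ^ j1)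
          + (a * x * y + c * y) := by rw [hN]; ring
    rw [e0, e1]
    simp only [TT_add]
    rw [TT_adj hfe (a ^ (2:ℕ)^k) x y (2*k) j2 hj2e]
    have t2 : TT m (x ^ (2:ℕ)^k * y) = TT m (x * y ^ (2:ℕ)^j1) := by
      have h := TT_adj hfe 1 x y k j1 hj1e
      simpa [one_mul, one_pow] using h
    rw [t2]
  -- if N y = 0 then TT (c*y) = 0
  have hker : ∀ y : F, N y = 0 → TT m (c * y) = 0 := by
    intro y hy
    have hpow : (N y) ^ (2:ℕ) ^ (2*k) = 0 := by
      rw [hy]; exact zero_pow (Nat.two_pow_pos _).ne'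
    have hT1 : ((a ^ (2:ℕ)^k) ^ (2:ℕ)^j2 * y ^ (2:ℕ)^j2) ^ (2:ℕ)^(2*k)
        = a ^ (2:ℕ)^k * y := by
      rw [mul_pow]
      congr 1
      · rw [ppow (a ^ (2:ℕ)^k) j2 (2*k), show j2 + 2*k = m from by omega, hfe]
      · rw [ppow y j2 (2*k), show j2 + 2*k = m from by omega, hfe]
    have hT2 : (y ^ (2:ℕ)^j1) ^ (2:ℕ)^(2*k) = y ^ (2:ℕ)^k := by
      rw [ppow y j1 (2*k), show j1 + 2*k = m + k from by omega, ← ppow y m k, hfe]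
    have hT3 : ((a : F) * y) ^ (2:ℕ)^(2*k) = a ^ (2:ℕ)^(2*k) * y ^ (2:ℕ)^(2*k) :=
      mul_pow ..
    have hexp : (N y) ^ (2:ℕ)^(2*k)
        = a ^ (2:ℕ)^k * y + y ^ (2:ℕ)^k + a ^ (2:ℕ)^(2*k) * y ^ (2:ℕ)^(2*k) := by
      show ((a ^ (2:ℕ)^k) ^ (2:ℕ)^j2 * y ^ (2:ℕ)^j2 + y ^ (2:ℕ)^j1 + a * y) ^ (2:ℕ)^(2*k) = _
      rw [add_pow_char_pow, add_pow_char_pow, hT1, hT2, hT3]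
    have h0 : a ^ (2:ℕ)^k * y + y ^ (2:ℕ)^k + a ^ (2:ℕ)^(2*k) * y ^ (2:ℕ)^(2*k) = 0 := by
      rw [← hexp]; exact hpow
    have hMy : a ^ (2:ℕ)^(2*k) * y ^ (2:ℕ)^(2*k) + y ^ (2:ℕ)^k + a ^ (2:ℕ)^k * y = 0 := by
      linear_combination h0
    exact TT_c c hc y (SS_ker hfe a y hMy)
  -- main count
  by_contra hno
  push_neg at hno
  have hfe2 := hfe
  -- inner sum over x for fixed y
  have hinner : ∀ y : F, (∑ x : F, EE m (Ax x * y)) = if N y = 0 then ((2:ℤ)^m) else 0 := by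
    intro y
    have h1 : ∀ x : F, EE m (Ax x * y) = EE m (x * N y) * EE m (c * y) := by
      intro x
      rw [EE_congr (hadj x y), EE_add hfe]
    rw [Finset.sum_congr rfl (fun x _ => h1 x), ← Finset.sum_mul, EE_orth hm0 hF hfe]
    by_cases hy : N y = 0
    · rw [if_pos hy, EE_one (hker y hy), mul_one]
    · rw [if_neg hy, zero_mul]
  -- sum over y : lower bound
  have hlow : ((2:ℤ)^m) ≤ ∑ y : F, ∑ x : F, EE m (Ax x * y) := by
    have hterm : ∀ y : F, (0:ℤ) ≤ ∑ x : F, EE m (Ax x * y) := by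
      intro y; rw [hinner y]
      split <;> positivity
    have hN0 : N (0:F) = 0 := by
      show (a ^ (2:ℕ)^k) ^ (2:ℕ)^j2 * (0:F) ^ (2:ℕ)^j2 + (0:F) ^ (2:ℕ)^j1 + a * 0 = 0
      rw [zero_pow (Nat.two_pow_pos j2).ne', zero_pow (Nat.two_pow_pos j1).ne']
      ring
    have h0 : (∑ x : F, EE m (Ax x * (0:F))) = (2:ℤ)^m := by
      rw [hinner 0, if_pos hN0]
    calc ((2:ℤ)^m) = ∑ x : F, EE m (Ax x * (0:F)) := h0.symm
      _ ≤ ∑ y : F, ∑ x : F, EE m (Ax x * y) :=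
        Finset.single_le_sum (fun y _ => hterm y) (Finset.mem_univ 0)
  -- sum over x : equals zero since no zero of Ax
  have hno' : ∀ x : F, Ax x ≠ 0 := hno
  have hupper : ∑ y : F, ∑ x : F, EE m (Ax x * y) = 0 := by
    rw [Finset.sum_comm]
    have hx : ∀ x : F, ∑ y : F, EE m (Ax x * y) = 0 := by
      intro x
      have : ∀ y : F, EE m (Ax x * y) = EE m (y * Ax x) := fun y => by rw [mul_comm]
      rw [Finset.sum_congr rfl (fun y _ => this y), EE_orth hm0 hF hfe, if_neg (hno' x)]
    rw [Finset.sum_congr rfl (fun x _ => hx x), Finset.sum_const, smul_zero]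
  rw [hupper] at hlow
  have : (0:ℤ) < 2^m := by positivity
  omega
end

section
/- Let n > 2 be odd, k ≥ 1, c ∈ GF(2^k) with Tr_k(c) = 1, and a ∈ GF(2^{nk})*. If the polynomial A_a(x) = a^{2^k} x^{2^{2k}} + x^{2^k} + a x + c has exactly 2^{2k} zeros in GF(2^{nk}), then every zero v of A_a in GF(2^{nk}) satisfies Tr_{nk}(v) = 1, where Tr_{nk} is the absolute trace from GF(2^{nk}) to GF(2). -/
open Finset

private def fq (k : ℕ) {F : Type*} [Field F] (x : F) : F := x ^ (2^k)

private lemma fq_def (k : ℕ) {F : Type*} [Field F] (x : F) : fq k x = x ^ (2^k) := rfl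

private lemma fq_pow (k : ℕ) {F : Type*} [Field F] : ∀ (i : ℕ) (x : F),
    (fq k)^[i] x = x ^ (2^(k*i))
  | 0, x => by simp
  | (i+1), x => by
      rw [Function.iterate_succ_apply', fq_pow k i x, fq_def, ← pow_mul, ← pow_add,
        Nat.mul_succ]

private lemma fq_add (k : ℕ) {F : Type*} [Field F] [CharP F 2] (x y : F) :
    fq k (x + y) = fq k x + fq k y := by
  haveI : Fact (Nat.Prime 2) := ⟨Nat.prime_two⟩
  exact add_pow_char_pow ..

private lemma fq_mul (k : ℕ) {F : Type*} [Field F] (x y : F) :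
    fq k (x * y) = fq k x * fq k y := mul_pow ..

private lemma fq_one (k : ℕ) {F : Type*} [Field F] : fq k (1 : F) = 1 := one_pow _

private lemma fqi_add (k : ℕ) {F : Type*} [Field F] [CharP F 2] :
    ∀ (i : ℕ) (x y : F), (fq k)^[i] (x + y) = (fq k)^[i] x + (fq k)^[i] y
  | 0, _, _ => rfl
  | (i+1), x, y => by
      rw [Function.iterate_succ_apply', Function.iterate_succ_apply',
        Function.iterate_succ_apply', fqi_add k i x y, fq_add]

private lemma fqi_mul (k : ℕ) {F : Type*} [Field F] :
    ∀ (i : ℕ) (x y : F), (fq k)^[i] (x * y) = (fq k)^[i] x * (fq k)^[i] y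
  | 0, _, _ => rfl
  | (i+1), x, y => by
      rw [Function.iterate_succ_apply', Function.iterate_succ_apply',
        Function.iterate_succ_apply', fqi_mul k i x y, fq_mul]

private lemma fqi_fixed (k : ℕ) {F : Type*} [Field F] {μ : F} (hμ : fq k μ = μ) :
    ∀ (i : ℕ), (fq k)^[i] μ = μ
  | 0 => rfl
  | (i+1) => by rw [Function.iterate_succ_apply', fqi_fixed k hμ i, hμ]

private def Tq (n k : ℕ) {F : Type*} [Field F] (x : F) : F :=
  ∑ i ∈ Finset.range n, (fq k)^[i] x

private lemma Tq_add (n k : ℕ) {F : Type*} [Field F] [CharP F 2] (x y : F) :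
    Tq n k (x + y) = Tq n k x + Tq n k y := by
  simp only [Tq, fqi_add, Finset.sum_add_distrib]

private lemma Tq_fq (n k : ℕ) {F : Type*} [Field F]
    (hN : ∀ x : F, (fq k)^[n] x = x) (x : F) : Tq n k (fq k x) = Tq n k x := by
  have h1 : ∑ i ∈ Finset.range (n+1), (fq k)^[i] x
      = (∑ i ∈ Finset.range n, (fq k)^[i+1] x) + (fq k)^[0] x :=
    Finset.sum_range_succ' _ n
  have h2 : ∑ i ∈ Finset.range (n+1), (fq k)^[i] x
      = (∑ i ∈ Finset.range n, (fq k)^[i] x) + (fq k)^[n] x :=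
    Finset.sum_range_succ _ n
  have h3 : ∀ i : ℕ, (fq k)^[i] (fq k x) = (fq k)^[i+1] x := by
    intro i; rw [Function.iterate_succ_apply]
  simp only [Function.iterate_zero_apply] at h1
  rw [hN] at h2
  have : (∑ i ∈ Finset.range n, (fq k)^[i+1] x) + x
      = (∑ i ∈ Finset.range n, (fq k)^[i] x) + x := by
    rw [← h1, h2]
  have h4 := add_right_cancel this
  calc Tq n k (fq k x) = ∑ i ∈ Finset.range n, (fq k)^[i+1] x := by
        simp only [Tq, h3]
    _ = Tq n k x := h4

private lemma Tq_smul (n k : ℕ) {F : Type*} [Field F] {μ : F} (hμ : fq k μ = μ) (x : F) :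
    Tq n k (μ * x) = μ * Tq n k x := by
  simp only [Tq, fqi_mul, fqi_fixed k hμ, Finset.mul_sum]

private lemma Tq_one (n k : ℕ) {F : Type*} [Field F] [CharP F 2] (hodd : Odd n) :
    Tq n k (1 : F) = 1 := by
  have h1 : ∀ i : ℕ, (fq k)^[i] (1:F) = 1 := fqi_fixed k (fq_one k)
  obtain ⟨m, hm⟩ := hodd
  have h2 : ((2:F)) = 0 := by
    have := CharP.cast_eq_zero F 2; exact_mod_cast this
  simp only [Tq, h1, Finset.sum_const, Finset.card_range, nsmul_eq_mul, mul_one, hm]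
  push_cast
  rw [h2]; ring

private lemma fq_zero (k : ℕ) {F : Type*} [Field F] : fq k (0:F) = 0 :=
  zero_pow (by positivity)

private lemma fq_iter_succ_out (k : ℕ) {F : Type*} [Field F] (m : ℕ) (z : F) :
    (fq k)^[m] (fq k z) = (fq k)^[m+1] z := (Function.iterate_succ_apply (fq k) m z).symm

private lemma fq_iter_succ_in (k : ℕ) {F : Type*} [Field F] (m : ℕ) (z : F) :
    fq k ((fq k)^[m] z) = (fq k)^[m+1] z := (Function.iterate_succ_apply' (fq k) m z).symm

private lemma TK (n k : ℕ) (hn1 : 1 ≤ n) {F : Type*} [Field F] [CharP F 2]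
    (hN : ∀ x : F, (fq k)^[n] x = x) (a t x : F)
    (ht : fq k a * fq k (fq k t) + fq k t + a * t = 1)
    (hx : fq k a * fq k (fq k x) + fq k x + a * x = 0) :
    Tq n k x = 0 := by
  have htwo : (2:F) = 0 := by exact_mod_cast CharP.cast_eq_zero F 2
  set Y1 : F := (fq k)^[n-1] a with hY1def
  set Y2 : F := (fq k)^[n-1] x with hY2def
  have hY1 : fq k Y1 = a := by
    rw [hY1def, fq_iter_succ_in, Nat.sub_add_cancel hn1, hN]
  have hY2 : fq k Y2 = x := by
    rw [hY2def, fq_iter_succ_in, Nat.sub_add_cancel hn1, hN]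
  -- E2 : a * fq x + x + Y1 * Y2 = 0
  have e2 : a * fq k x + x + Y1 * Y2 = 0 := by
    have e := congrArg ((fq k)^[n-1]) hx
    simp only [fqi_add k, fqi_mul k] at e
    rw [fq_iter_succ_out k (n-1) a, fq_iter_succ_out k (n-1) (fq k x),
      fq_iter_succ_out k (n-1) x, Nat.sub_add_cancel hn1, hN, hN, hN] at e
    rw [fqi_fixed k (fq_zero k) (n-1)] at e
    exact e
  -- m1 : fq x decomposition from ht
  have m1 : fq k x = fq k a * fq k (fq k t) * fq k x + fq k t * fq k x + a*t*fq k x := by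
    linear_combination (fq k x) * ht + (fq k x - fq k a * fq k (fq k t) * fq k x
      - fq k t * fq k x - a*t*fq k x) * htwo
  -- arguments as fq-images
  have arg1 : fq k (a * fq k t * x) = fq k a * fq k (fq k t) * fq k x := by
    rw [fq_mul, fq_mul]
  have arg2 : fq k (t * x) = fq k t * fq k x := by rw [fq_mul]
  have e1 : Tq n k x
      = Tq n k (a * fq k t * x) + Tq n k (t*x) + Tq n k (a*t*fq k x) := by
    have h := congrArg (Tq n k) m1
    rw [Tq_add, Tq_add, ← arg1, ← arg2, Tq_fq n k hN, Tq_fq n k hN, Tq_fq n k hN] at h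
    exact h
  -- E3
  have m2 : a*t*fq k x = t*x + t*(Y1*Y2) := by
    linear_combination t * e2 - (t*x + t*(Y1*Y2)) * htwo
  have arg3 : fq k (t*(Y1*Y2)) = fq k t * (a * x) := by
    rw [fq_mul, fq_mul, hY1, hY2]
  have arg4 : fq k t * (a*x) = a * fq k t * x := by ring
  have e3 : Tq n k (a*t*fq k x) = Tq n k (t*x) + Tq n k (a * fq k t * x) := by
    rw [m2, Tq_add, ← Tq_fq n k hN (t*(Y1*Y2)), arg3, arg4]
  rw [e1, e3]
  linear_combination (Tq n k (a * fq k t * x) + Tq n k (t*x)) * htwo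

private lemma pow2k (k : ℕ) {F : Type*} [Field F] (x : F) :
    x ^ (2^(2*k)) = fq k (fq k x) := by
  rw [fq_def, fq_def, ← pow_mul, ← pow_add, two_mul]

theorem stmt12 (n k : ℕ) (hn : 2 < n) (hodd : Odd n) (hk : 1 ≤ k)
    (F : Type*) [Field F] [Fintype F] (hF : Fintype.card F = 2 ^ (n * k))
    (c : F) (hc : c ^ (2 ^ k) = c)
    (htr : ∑ i ∈ Finset.range k, c ^ (2 ^ i) = 1)
    (a : F) (ha : a ≠ 0)
    (hzeros : Nat.card {x : F //
        a ^ (2 ^ k) * x ^ (2 ^ (2 * k)) + x ^ (2 ^ k) + a * x + c = 0} = 2 ^ (2 * k)) :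
    ∀ v : F, a ^ (2 ^ k) * v ^ (2 ^ (2 * k)) + v ^ (2 ^ k) + a * v + c = 0 →
      ∑ i ∈ Finset.range (n * k), v ^ (2 ^ i) = 1 := by
  -- characteristic 2
  obtain ⟨p, hp⟩ := CharP.exists F
  haveI := hp
  have hprime : p.Prime := CharP.char_is_prime F p
  have hp2 : p = 2 := by
    obtain ⟨m, -, hcard⟩ := FiniteField.card F p
    have hdvd : p ∣ 2 ^ (n*k) := by
      rw [← hF, hcard]; exact dvd_pow_self p m.2.ne'
    exact (Nat.prime_dvd_prime_iff_eq hprime Nat.prime_two).mp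
      (hprime.dvd_of_dvd_pow hdvd)
  subst hp2
  haveI : CharP F 2 := hp
  have htwo : (2:F) = 0 := by exact_mod_cast CharP.cast_eq_zero F 2
  have hN : ∀ x : F, (fq k)^[n] x = x := by
    intro x; rw [fq_pow, mul_comm k n, ← hF]; exact FiniteField.pow_card x
  have hn1 : 1 ≤ n := by omega
  have hc0 : c ≠ 0 := by
    intro h
    rw [h] at htr
    have : ∀ i ∈ Finset.range k, (0:F) ^ (2^i) = 0 := by
      intro i _; exact zero_pow (by positivity)
    rw [Finset.sum_congr rfl this, Finset.sum_const, smul_zero] at htr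
    exact one_ne_zero htr.symm
  intro v hv
  -- hypothesis in fq-language
  have hvf : fq k a * fq k (fq k v) + fq k v + a * v + c = 0 := by
    rw [← pow2k k v]; exact hv
  have hsum : fq k a * fq k (fq k v) + fq k v + a * v = c := by
    linear_combination hvf - c * htwo
  set t := v * c⁻¹ with htdef
  have hfc : fq k c = c := hc
  have hfcinv : fq k c⁻¹ = c⁻¹ := by rw [fq_def, inv_pow, hc]
  have h1t : fq k t = fq k v * c⁻¹ := by rw [htdef, fq_mul, hfcinv]
  have h2t : fq k (fq k t) = fq k (fq k v) * c⁻¹ := by rw [h1t, fq_mul, hfcinv]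
  have ht : fq k a * fq k (fq k t) + fq k t + a * t = 1 := by
    rw [h2t, h1t, htdef]
    field_simp
    linear_combination hsum
  -- kernel has 2^(2k) elements
  have hzeros' : Nat.card {x : F //
      fq k a * fq k (fq k x) + fq k x + a * x + c = 0} = 2 ^ (2*k) := by
    rw [← hzeros]
    apply Nat.card_congr
    exact (Equiv.subtypeEquivRight (fun x => by rw [pow2k k x]; rfl)).symm
  have hvv : v + v = 0 := by linear_combination v * htwo
  have hKcard : Nat.card {x : F //
      fq k a * fq k (fq k x) + fq k x + a * x = 0} = 2 ^ (2*k) := by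
    rw [← hzeros']
    apply Nat.card_congr
    refine ⟨fun y => ⟨y.1 + v, ?_⟩, fun z => ⟨z.1 + v, ?_⟩, ?_, ?_⟩
    · have hy := y.2
      rw [fq_add, fq_add]
      linear_combination hy + hvf
    · have hz := z.2
      rw [fq_add, fq_add]
      linear_combination hz + hvf - c * htwo
    · intro y
      apply Subtype.ext
      show y.1 + v + v = y.1
      rw [add_assoc, hvv, add_zero]
    · intro z
      apply Subtype.ext
      show z.1 + v + v = z.1
      rw [add_assoc, hvv, add_zero]
  -- extract u1 ≠ 0 in the kernel
  have hu1ex : ∃ u : F, (fq k a * fq k (fq k u) + fq k u + a*u = 0) ∧ u ≠ 0 := by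
    by_contra h
    push_neg at h
    haveI hss : Subsingleton {x : F // fq k a * fq k (fq k x) + fq k x + a*x = 0} :=
      ⟨fun y z => Subtype.ext (by rw [h y.1 y.2, h z.1 z.2])⟩
    haveI hne : Nonempty {x : F // fq k a * fq k (fq k x) + fq k x + a*x = 0} :=
      ⟨⟨0, by rw [fq_zero, fq_zero]; ring⟩⟩
    have hle : Nat.card {x : F // fq k a * fq k (fq k x) + fq k x + a*x = 0} = 1 :=
      Nat.card_unique
    rw [hKcard] at hle
    have h4 : (1:ℕ) < 2^(2*k) := Nat.one_lt_two_pow_iff.mpr (by omega)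
    omega
  obtain ⟨u1, hu1k, hu10⟩ := hu1ex
  -- extract independent u2
  have hu2ex : ∃ u : F, (fq k a * fq k (fq k u) + fq k u + a*u = 0) ∧
      fq k (u * u1⁻¹) ≠ u * u1⁻¹ := by
    by_contra hcon
    push_neg at hcon
    classical
    set P : Polynomial F := Polynomial.X ^ (2^k) - Polynomial.X with hPdef
    have hklt : (1:ℕ) < 2^k := Nat.one_lt_two_pow_iff.mpr (by omega)
    have hdegP : P.natDegree = 2^k := by
      rw [hPdef, Polynomial.natDegree_sub_eq_left_of_natDegree_lt
        (by rw [Polynomial.natDegree_X, Polynomial.natDegree_X_pow]; omega),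
        Polynomial.natDegree_X_pow]
    have hP0 : P ≠ 0 := by
      intro h0; rw [h0, Polynomial.natDegree_zero] at hdegP; omega
    have hmem : ∀ y : {x : F // fq k a * fq k (fq k x) + fq k x + a*x = 0},
        (y.1 * u1⁻¹) ∈ P.roots.toFinset := by
      intro y
      rw [Multiset.mem_toFinset, Polynomial.mem_roots hP0]
      show P.IsRoot _
      rw [hPdef]
      simp only [Polynomial.IsRoot, Polynomial.eval_sub, Polynomial.eval_pow,
        Polynomial.eval_X]
      rw [sub_eq_zero]
      exact hcon y.1 y.2
    have hinj : Function.Injective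
        (fun y : {x : F // fq k a * fq k (fq k x) + fq k x + a*x = 0} =>
          (⟨y.1 * u1⁻¹, hmem y⟩ : {z : F // z ∈ P.roots.toFinset})) := by
      intro y z hyz
      apply Subtype.ext
      have h1 := congrArg Subtype.val hyz
      exact mul_right_cancel₀ (inv_ne_zero hu10) h1
    have hle := Nat.card_le_card_of_injective _ hinj
    rw [hKcard, Nat.card_eq_finsetCard] at hle
    have hb1 : P.roots.toFinset.card ≤ Multiset.card P.roots :=
      Multiset.toFinset_card_le _
    have hb2 : Multiset.card P.roots ≤ 2^k := by
      have hcr := Polynomial.card_roots' P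
      rw [hdegP] at hcr
      exact hcr
    have hle2 : (2:ℕ)^(2*k) ≤ 2^k := by omega
    have := (Nat.pow_le_pow_iff_right (le_refl 2)).mp hle2
    omega
  obtain ⟨u2, hu2k, hw⟩ := hu2ex
  -- D and μ
  set D := u1 * fq k u2 + fq k u1 * u2 with hDdef
  have hfu1 : fq k u1 ≠ 0 := pow_ne_zero _ hu10
  have hfinv1 : fq k u1⁻¹ = (fq k u1)⁻¹ := by rw [fq_def, fq_def, inv_pow]
  have hD0 : D ≠ 0 := by
    intro h0
    apply hw
    have h1 : u1 * fq k u2 = fq k u1 * u2 := by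
      rw [hDdef] at h0
      linear_combination h0 - (fq k u1 * u2) * htwo
    rw [fq_mul, hfinv1]
    field_simp
    linear_combination h1
  set μ := a * D with hμdef
  have hfD : fq k a * fq k D = a * D := by
    rw [hDdef, fq_add, fq_mul, fq_mul]
    linear_combination (fq k u1) * hu2k + (fq k u2) * hu1k
      - (fq k u1 * fq k u2 + a * fq k u1 * u2 + a * u1 * fq k u2) * htwo
  have hfμ : fq k μ = μ := by rw [hμdef, fq_mul]; exact hfD
  have hμ0 : μ ≠ 0 := mul_ne_zero ha hD0
  -- T(u1 u2) = μ
  have hC1 : fq k (u1 * u2 + a * fq k u1 * u2) = a * u1 * fq k u2 := by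
    rw [fq_add, fq_mul, fq_mul, fq_mul]
    linear_combination (fq k u2) * hu1k - (a * u1 * fq k u2) * htwo
  have hTP : Tq n k (u1 * u2) = μ := by
    have s1 : u1*u2 = (u1*u2 + a * fq k u1 * u2) + a * fq k u1 * u2 := by
      linear_combination - (a * fq k u1 * u2) * htwo
    have s2 : a*u1*fq k u2 + a*fq k u1*u2 = μ * 1 := by
      rw [hμdef, hDdef]; ring
    calc Tq n k (u1*u2)
        = Tq n k ((u1*u2 + a*fq k u1*u2) + a*fq k u1*u2) := by rw [← s1]
      _ = Tq n k (u1*u2 + a*fq k u1*u2) + Tq n k (a*fq k u1*u2) := Tq_add ..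
      _ = Tq n k (fq k (u1*u2 + a*fq k u1*u2)) + Tq n k (a*fq k u1*u2) := by
            rw [Tq_fq n k hN]
      _ = Tq n k (a*u1*fq k u2) + Tq n k (a*fq k u1*u2) := by rw [hC1]
      _ = Tq n k (a*u1*fq k u2 + a*fq k u1*u2) := (Tq_add ..).symm
      _ = Tq n k (μ * 1) := by rw [s2]
      _ = μ * Tq n k 1 := Tq_smul n k hfμ 1
      _ = μ := by rw [Tq_one n k hodd, mul_one]
  -- squared instance
  have hsq := congrArg (fun z => z * z) ht
  simp only [mul_one] at hsq
  have hta2e : fq k a * fq k a * (fq k (fq k t) * fq k (fq k t))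
      + fq k t * fq k t + (a*a)*(t*t) = 1 := by
    linear_combination hsq - ((fq k a * fq k (fq k t)) * (fq k t)
      + (fq k a * fq k (fq k t)) * (a*t) + (fq k t) * (a*t)) * htwo
  have hta2 : fq k (a*a) * fq k (fq k (t*t)) + fq k (t*t) + (a*a)*(t*t) = 1 := by
    simp only [fq_mul]
    linear_combination hta2e
  have hLPe : fq k a * fq k a * (fq k (fq k u1) * fq k (fq k u2))
      + fq k u1 * fq k u2 + (a*a)*(u1*u2) = μ := by
    rw [hμdef, hDdef]
    linear_combination (fq k a * fq k (fq k u2)) * hu1k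
      - (fq k u1 + a*u1) * hu2k
      + (fq k u1 * fq k u2 + a*a*u1*u2) * htwo
  have hfμinv : fq k μ⁻¹ = μ⁻¹ := by
    have h1 : fq k μ⁻¹ = (fq k μ)⁻¹ := by rw [fq_def, fq_def, inv_pow]
    rw [h1, hfμ]
  have hμinv : μ * μ⁻¹ = 1 := mul_inv_cancel₀ hμ0
  set x0 := t*t + (u1*u2) * μ⁻¹ with hx0def
  have hexp4 : fq k x0 = fq k t * fq k t + (fq k u1 * fq k u2) * μ⁻¹ := by
    rw [hx0def]
    simp only [fq_add, fq_mul, hfμinv]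
  have hexp5 : fq k (fq k x0) = fq k (fq k t) * fq k (fq k t)
      + (fq k (fq k u1) * fq k (fq k u2)) * μ⁻¹ := by
    have h2 := congrArg (fq k) hexp4
    simp only [fq_add, fq_mul, hfμinv] at h2
    exact h2
  have hx0 : fq k (a*a) * fq k (fq k x0) + fq k x0 + (a*a)*x0 = 0 := by
    rw [fq_mul, hexp5, hexp4, hx0def]
    linear_combination hta2e + μ⁻¹ * hLPe + hμinv + htwo
  have hTx0 := TK n k hn1 hN (a*a) (t*t) x0 hta2 hx0
  -- T t = 1
  haveI : Fact (Nat.Prime 2) := ⟨Nat.prime_two⟩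
  have hTt2 : Tq n k (t*t) = Tq n k t * Tq n k t := by
    simp only [Tq, fqi_mul]
    rw [← pow_two, sum_pow_char]
    apply Finset.sum_congr rfl
    intro i _
    rw [pow_two]
  have htt1 : Tq n k (t*t) = 1 := by
    have hx0' : t*t = x0 + (u1*u2)*μ⁻¹ := by
      rw [hx0def]
      linear_combination - ((u1*u2)*μ⁻¹) * htwo
    rw [hx0', Tq_add, hTx0, zero_add]
    have hcomm : (u1*u2)*μ⁻¹ = μ⁻¹*(u1*u2) := by ring
    rw [hcomm, Tq_smul n k hfμinv, hTP]
    exact inv_mul_cancel₀ hμ0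
  have hq1 : Tq n k t * Tq n k t = 1 := by rw [← hTt2]; exact htt1
  have hTt : Tq n k t = 1 := by
    have h2 : (Tq n k t - 1)*(Tq n k t - 1) = 0 := by
      linear_combination hq1 + (1 - Tq n k t) * htwo
    have h3 := mul_self_eq_zero.mp h2
    exact sub_eq_zero.mp h3
  have hvc : v = c * t := by rw [htdef]; field_simp
  have hTv : Tq n k v = c := by rw [hvc, Tq_smul n k hfc, hTt, mul_one]
  -- final reindexing
  have hsplit : ∑ j ∈ Finset.range (n*k), v^(2^j)
      = ∑ p ∈ Finset.range k ×ˢ Finset.range n, ((fq k)^[p.2] v)^(2^(p.1)) := by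
    apply Finset.sum_nbij' (i := fun j => (j % k, j / k))
      (j := fun p : ℕ × ℕ => p.1 + k * p.2)
    · intro j hj
      rw [Finset.mem_range] at hj
      rw [Finset.mem_product, Finset.mem_range, Finset.mem_range]
      constructor
      · exact Nat.mod_lt _ (by omega)
      · rw [Nat.div_lt_iff_lt_mul (by omega : 0 < k)]
        omega
    · intro p hp
      rw [Finset.mem_product, Finset.mem_range, Finset.mem_range] at hp
      rw [Finset.mem_range]
      have h1 : p.1 + k * p.2 < k + k * (n-1) := by
        have : p.2 ≤ n - 1 := by omega
        have : k * p.2 ≤ k * (n-1) := Nat.mul_le_mul_left k this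
        omega
      have h2 : k + k * (n-1) = n * k := by
        have : 1 ≤ n := hn1
        calc k + k*(n-1) = k * (1 + (n-1)) := by ring
          _ = k * n := by congr 1; omega
          _ = n * k := by ring
      omega
    · intro j _
      exact Nat.mod_add_div j k
    · intro p hp
      rw [Finset.mem_product, Finset.mem_range, Finset.mem_range] at hp
      have h1 : (p.1 + k * p.2) % k = p.1 := by
        rw [Nat.add_mul_mod_self_left, Nat.mod_eq_of_lt hp.1]
      have h2 : (p.1 + k * p.2) / k = p.2 := by
        rw [Nat.add_mul_div_left _ _ (by omega : 0 < k),
          Nat.div_eq_of_lt hp.1, zero_add]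
      exact Prod.ext h1 h2
    · intro j _
      rw [fq_pow, ← pow_mul, ← pow_add, Nat.div_add_mod]
  rw [hsplit, Finset.sum_product]
  have hinner : ∀ i ∈ Finset.range k,
      (∑ l ∈ Finset.range n, ((fq k)^[l] v)^(2^i)) = c^(2^i) := by
    intro i _
    rw [← sum_pow_char_pow]
    have : (∑ l ∈ Finset.range n, (fq k)^[l] v) = Tq n k v := rfl
    rw [this, hTv]
  calc ∑ i ∈ Finset.range k, ∑ l ∈ Finset.range n, ((fq k)^[l] v)^(2^i)
      = ∑ i ∈ Finset.range k, c^(2^i) := Finset.sum_congr rfl hinner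
    _ = 1 := htr
end

section
/- Let n be odd, k ≥ 1, a ∈ GF(2^{nk}) nonzero, r ∈ GF(2^{2nk})* with r^{2^{nk}+1} = 1 and r^{(2^{nk}+1)/(2^k+1)} ≠ 1. Then the linearized polynomial L_a(z) = z^{2^{(n+1)k}} + r^{2^k} a^{2^k} z^{2^{2k}} + r a z has at most 2^{2k} zeros in GF(2^{2nk}). -/
/-!
Write `Q = 2^{nk}`, `q = 2^k` and `c = r a`, so that `L_a(z) = z^{Qq} + c^q z^{q²} + c z`. For
two zeros `z₁, z₂` put `B = z₁^{q²} z₂ - z₂^{q²} z₁`. Eliminating the top term between the two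
equations and using `x^{Q²} = x` gives `(cB)^Q = (c^q B)^q`. If `B ≠ 0`, raising
`(cB)^{Q+1} = c^{q²+1} B^{q+1}` to the power `N = (Q+1)/(q+1)` exhibits `(r^N)^2` as a quotient
of two elements of `GF(Q)`; it is also a `(Q+1)`-st root of unity, and in characteristic 2 the
only such element of `GF(Q)` is `1`. So `r^N = 1`, which is excluded. Hence `B = 0` for every
pair of zeros: all zeros lie on the `GF(q²)`-line through one nonzero zero, which has `q²` points.
-/

open Polynomial

theorem Polynomial.card_subtype_le_natDegree {R : Type*} [CommRing R] [IsDomain R] {p : R[X]}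
    (hp : p ≠ 0) {P : R → Prop} (hP : ∀ x, P x → p.IsRoot x) :
    Nat.card {x // P x} ≤ p.natDegree := by
  classical
  calc Nat.card {x // P x} ≤ Nat.card p.roots.toFinset :=
        Nat.card_le_card_of_injective (fun x ↦ ⟨x.1, by simpa [hp] using hP x.1 x.2⟩)
          fun _ _ h ↦ Subtype.ext (Subtype.mk.inj h)
    _ = p.roots.toFinset.card := Nat.card_eq_finsetCard _
    _ ≤ Multiset.card p.roots := Multiset.toFinset_card_le _
    _ ≤ p.natDegree := p.card_roots'

theorem card_le_of_forall_pow_mul_eq_pow_mul {K : Type*} [Field K] {d : ℕ} (hd : 1 < d)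
    {P : K → Prop} (hP : ∀ z₁ z₂, P z₁ → P z₂ → z₁ ^ d * z₂ = z₂ ^ d * z₁) :
    Nat.card {z // P z} ≤ d := by
  by_cases h : ∃ z₀, P z₀ ∧ z₀ ≠ 0
  · obtain ⟨z₀, hz₀, hz₀0⟩ := h
    set p : K[X] := C z₀ * X ^ d - C (z₀ ^ d) * X
    have hcoeff : p.coeff d = z₀ := by
      simp only [p, coeff_sub, coeff_C_mul, coeff_X_pow, coeff_X, if_neg hd.ne, ite_true, mul_one,
        mul_zero, sub_zero]
    have hp : p ≠ 0 := fun h ↦ hz₀0 (by simpa [h] using hcoeff.symm)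
    have hdeg : p.natDegree ≤ d := by
      unfold p; compute_degree; omega
    refine (card_subtype_le_natDegree hp fun z hz ↦ ?_).trans hdeg
    simp only [p, IsRoot, eval_sub, eval_mul, eval_C, eval_pow, eval_X]
    linear_combination hP z z₀ hz hz₀
  · push Not at h
    have : Subsingleton {z // P z} :=
      ⟨fun x y ↦ Subtype.ext ((h x.1 x.2).trans (h y.1 y.2).symm)⟩
    exact (Finite.card_le_one_iff_subsingleton.mpr this).trans hd.le

theorem pow_eq_pow_of_linearized_eq_zero {R : Type*} [CommRing R] {p s t : ℕ} [ExpChar R p]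
    (hR : ∀ x : R, (x ^ p ^ s) ^ p ^ s = x) {c z₁ z₂ : R}
    (h₁ : z₁ ^ (p ^ s * p ^ t) + c ^ p ^ t * z₁ ^ (p ^ t * p ^ t) + c * z₁ = 0)
    (h₂ : z₂ ^ (p ^ s * p ^ t) + c ^ p ^ t * z₂ ^ (p ^ t * p ^ t) + c * z₂ = 0) :
    (c * (z₁ ^ (p ^ t * p ^ t) * z₂ - z₂ ^ (p ^ t * p ^ t) * z₁)) ^ p ^ s =
      (c ^ p ^ t * (z₁ ^ (p ^ t * p ^ t) * z₂ - z₂ ^ (p ^ t * p ^ t) * z₁)) ^ p ^ t := by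
  set Q := p ^ s
  set q := p ^ t
  have hC : c * (z₁ ^ (q * q) * z₂ - z₂ ^ (q * q) * z₁) =
      z₁ ^ (Q * q) * z₂ ^ (q * q) - z₂ ^ (Q * q) * z₁ ^ (q * q) := by
    linear_combination z₁ ^ (q * q) * h₂ - z₂ ^ (q * q) * h₁
  have hA : c ^ q * (z₁ ^ (q * q) * z₂ - z₂ ^ (q * q) * z₁) =
      z₁ * z₂ ^ (Q * q) - z₂ * z₁ ^ (Q * q) := by
    linear_combination z₂ * h₁ - z₁ * h₂
  have hQQ : ∀ x : R, x ^ (Q * q * Q) = x ^ q := fun x ↦ by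
    rw [mul_right_comm, pow_mul, pow_mul, hR]
  have hsubQ : ∀ x y : R, (x - y) ^ Q = x ^ Q - y ^ Q := fun x y ↦ sub_pow_expChar_pow x y s
  have hsubq : ∀ x y : R, (x - y) ^ q = x ^ q - y ^ q := fun x y ↦ sub_pow_expChar_pow x y t
  rw [hC, hA, hsubQ, hsubq]
  simp only [mul_pow, ← pow_mul, hQQ, show q * q * Q = Q * q * q by ring]

theorem eq_one_of_pow_succ_eq_one_of_mul_pow_eq_self {R : Type*} [CommRing R] [IsDomain R]
    [CharP R 2] {Q : ℕ} {ρ X : R} (hρ : ρ ^ (Q + 1) = 1) (hX : X ^ Q = X) (hX0 : X ≠ 0)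
    (h : (ρ * X) ^ Q = ρ * X) : ρ = 1 := by
  have hρQ : ρ ^ Q = ρ := mul_right_cancel₀ hX0 (by rw [← h, mul_pow, hX])
  exact CharTwo.sq_inj.mp (by rw [one_pow, ← hρ, pow_succ ρ Q, hρQ, sq])

theorem pow_eq_one_of_mul_pow_eq_mul_pow {K : Type*} [Field K] [CharP K 2] {Q q N : ℕ}
    (hK : ∀ x : K, (x ^ Q) ^ Q = x) (hq : 0 < q) (hN : (q + 1) * N = Q + 1) {a r B : K}
    (ha : a ^ Q = a) (ha0 : a ≠ 0) (hr : r ^ (Q + 1) = 1) (hB : B ≠ 0)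
    (h : (r * a * B) ^ Q = ((r * a) ^ q * B) ^ q) : r ^ N = 1 := by
  have hnorm : ∀ x : K, (x ^ (Q + 1)) ^ Q = x ^ (Q + 1) := fun x ↦ by
    rw [← pow_mul, show (Q + 1) * Q = Q * Q + Q by ring, pow_add, pow_mul, hK, pow_succ']
  have hrN : (r ^ N) ^ (q + 1) = 1 := by rw [← pow_mul, mul_comm, hN, hr]
  have hrN' : (r ^ N) ^ (q * q + 1) = (r ^ N) ^ 2 := by
    obtain ⟨q, rfl⟩ : ∃ q', q = q' + 1 := ⟨q - 1, by omega⟩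
    rw [show (q + 1) * (q + 1) + 1 = (q + 1 + 1) * q + 2 by ring, pow_add, pow_mul, hrN,
      one_pow, one_mul]
  have hkey :
      (r ^ N) ^ 2 * (a ^ ((q * q + 1) * N) * B ^ (Q + 1)) = ((r * a * B) ^ (Q + 1)) ^ N := by
    rw [pow_succ (r * a * B), h, ← hrN', ← hN]
    ring
  have hρ : (r ^ N) ^ 2 = 1 := by
    refine eq_one_of_pow_succ_eq_one_of_mul_pow_eq_self (Q := Q)
      (X := a ^ ((q * q + 1) * N) * B ^ (Q + 1)) ?_ ?_ ?_ ?_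
    · rw [pow_right_comm _ 2, pow_right_comm r N, hr, one_pow, one_pow]
    · rw [mul_pow, pow_right_comm a, ha, hnorm]
    · exact mul_ne_zero (pow_ne_zero _ ha0) (pow_ne_zero _ hB)
    · rw [hkey, pow_right_comm _ N Q, hnorm]
  exact CharTwo.sq_inj.mp (by rw [hρ, one_pow])

theorem pow_mul_eq_pow_mul_of_linearized_eq_zero {K : Type*} [Field K] [CharP K 2] {s t N : ℕ}
    (hK : ∀ x : K, (x ^ 2 ^ s) ^ 2 ^ s = x) (hN : (2 ^ t + 1) * N = 2 ^ s + 1) {a r : K}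
    (ha : a ^ 2 ^ s = a) (ha0 : a ≠ 0) (hr : r ^ (2 ^ s + 1) = 1) (hrN : r ^ N ≠ 1) {z₁ z₂ : K}
    (h₁ : z₁ ^ (2 ^ s * 2 ^ t) + (r * a) ^ 2 ^ t * z₁ ^ (2 ^ t * 2 ^ t) + r * a * z₁ = 0)
    (h₂ : z₂ ^ (2 ^ s * 2 ^ t) + (r * a) ^ 2 ^ t * z₂ ^ (2 ^ t * 2 ^ t) + r * a * z₂ = 0) :
    z₁ ^ (2 ^ t * 2 ^ t) * z₂ = z₂ ^ (2 ^ t * 2 ^ t) * z₁ := by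
  by_contra hne
  exact hrN (pow_eq_one_of_mul_pow_eq_mul_pow hK (by positivity) hN ha ha0 hr
    (sub_ne_zero.mpr hne) (pow_eq_pow_of_linearized_eq_zero hK h₁ h₂))

theorem stmt15_general (n k : ℕ) (hodd : Odd n) (hk : 1 ≤ k)
    (E : Type*) [Field E] [Fintype E] (hE : Fintype.card E = 2 ^ (2 * n * k))
    (a : E) (haF : a ^ (2 ^ (n * k)) = a) (ha : a ≠ 0)
    (r : E) (hr1 : r ^ (2 ^ (n * k) + 1) = 1)
    (hr2 : r ^ ((2 ^ (n * k) + 1) / (2 ^ k + 1)) ≠ 1) :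
    Nat.card {z : E //
        z ^ (2 ^ ((n + 1) * k)) + r ^ (2 ^ k) * a ^ (2 ^ k) * z ^ (2 ^ (2 * k)) +
          r * a * z = 0} ≤ 2 ^ (2 * k) := by
  have : CharP E 2 := charP_of_card_eq_prime_pow hE
  have hfrob : ∀ x : E, (x ^ 2 ^ (n * k)) ^ 2 ^ (n * k) = x := fun x ↦ by
    rw [← pow_mul, ← pow_add, show n * k + n * k = 2 * n * k by ring, ← hE, FiniteField.pow_card]
  have hN : (2 ^ k + 1) * ((2 ^ (n * k) + 1) / (2 ^ k + 1)) = 2 ^ (n * k) + 1 :=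
    Nat.mul_div_cancel' (by simpa [pow_mul'] using hodd.nat_add_dvd_pow_add_pow (2 ^ k) 1)
  refine card_le_of_forall_pow_mul_eq_pow_mul (Nat.one_lt_two_pow (by omega))
    fun z₁ z₂ h₁ h₂ ↦ ?_
  simp only [show 2 ^ ((n + 1) * k) = 2 ^ (n * k) * 2 ^ k by ring,
    show 2 ^ (2 * k) = 2 ^ k * 2 ^ k by ring, ← mul_pow r a] at h₁ h₂ ⊢
  exact pow_mul_eq_pow_mul_of_linearized_eq_zero hfrob hN haF ha hr1 hr2 h₁ h₂

theorem stmt15 (n k : ℕ) (hodd : Odd n) (hn : 1 ≤ n) (hk : 1 ≤ k)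
    (E : Type*) [Field E] [Fintype E] (hE : Fintype.card E = 2 ^ (2 * n * k))
    (a : E) (haF : a ^ (2 ^ (n * k)) = a) (ha : a ≠ 0)
    (r : E) (hr0 : r ≠ 0) (hr1 : r ^ (2 ^ (n * k) + 1) = 1)
    (hr2 : r ^ ((2 ^ (n * k) + 1) / (2 ^ k + 1)) ≠ 1) :
    Nat.card {z : E //
        z ^ (2 ^ ((n + 1) * k)) + r ^ (2 ^ k) * a ^ (2 ^ k) * z ^ (2 ^ (2 * k)) +
          r * a * z = 0} ≤ 2 ^ (2 * k) :=
  stmt15_general n k hodd hk E hE a haF ha r hr1 hr2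
end

section
/- Let n > 2 be odd, k ≥ 1, a ∈ GF(2^{nk}), r ∈ GF(2^{2nk})* with r^{2^{nk}+1} = 1 and r^{(2^{nk}+1)/(2^k+1)} ≠ 1, and set L_a(z) = z^{2^{(n+1)k}} + r^{2^k} a^{2^k} z^{2^{2k}} + r a z. Then every v ∈ GF(2^{2nk}) with L_a(v) = 0 satisfies Tr_{2nk}(r a v^{2^k+1}) + Tr_{nk}(v^{2^{nk}+1}) = 0, where Tr_{2nk} and Tr_{nk} are the absolute traces of GF(2^{2nk}) and GF(2^{nk}) to GF(2). -/
theorem stmt16 (n k : ℕ) (hodd : Odd n) (hn : 2 < n) (hk : 1 ≤ k)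
    (E : Type*) [Field E] [Fintype E] (hE : Fintype.card E = 2 ^ (2 * n * k))
    (a : E) (haF : a ^ (2 ^ (n * k)) = a)
    (r : E) (hr0 : r ≠ 0) (hr1 : r ^ (2 ^ (n * k) + 1) = 1)
    (hr2 : r ^ ((2 ^ (n * k) + 1) / (2 ^ k + 1)) ≠ 1) :
    ∀ v : E,
      v ^ (2 ^ ((n + 1) * k)) + r ^ (2 ^ k) * a ^ (2 ^ k) * v ^ (2 ^ (2 * k)) +
          r * a * v = 0 →
      (∑ i ∈ Finset.range (2 * n * k), (r * a * v ^ (2 ^ k + 1)) ^ (2 ^ i)) +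
        (∑ i ∈ Finset.range (n * k), (v ^ (2 ^ (n * k) + 1)) ^ (2 ^ i)) = 0 := by
  intro v hL
  have hm : n * k ≠ 0 := by positivity
  -- characteristic 2
  have hcast : ((Fintype.card E : ℕ) : E) = 0 := Nat.cast_card_eq_zero E
  rw [hE] at hcast
  push_cast at hcast
  have h2 : (2 : E) = 0 :=
    pow_eq_zero_iff (by positivity : 2 * n * k ≠ 0) |>.mp hcast
  haveI : Fact (Nat.Prime 2) := ⟨Nat.prime_two⟩
  haveI hchar : CharP E 2 := (CharP.charP_iff_prime_eq_zero Nat.prime_two).2 h2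
  have hadd : ∀ x : E, x + x = 0 := fun x => by linear_combination x * h2
  -- Frobenius fixes E under 2^(2nk)
  have hv2m : v ^ (2 ^ (2 * (n * k))) = v := by
    have := FiniteField.pow_card v
    rwa [hE, show 2 * n * k = 2 * (n * k) by ring] at this
  set w : E := r * a * v ^ (2 ^ k + 1) with hw
  set N : E := v ^ (2 ^ (n * k) + 1) with hN
  -- N is fixed by 2^(nk) Frobenius
  have hNfix : N ^ (2 ^ (n * k)) = N := by
    have e : (2 ^ (n*k) + 1) * 2 ^ (n*k) = 2 ^ (2*(n*k)) + 2^(n*k) := by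
      rw [two_mul, pow_add]; ring
    calc N ^ 2^(n*k) = v ^ ((2^(n*k)+1) * 2^(n*k)) := by rw [hN, ← pow_mul]
      _ = v ^ (2^(2*(n*k))) * v ^ (2^(n*k)) := by rw [e, pow_add]
      _ = v * v ^ (2^(n*k)) := by rw [hv2m]
      _ = N := by rw [hN, pow_add, pow_one, mul_comm]
  -- key identity: w + w^(2^k) = N^(2^k)
  have key1 : w + w ^ (2 ^ k) = N ^ (2 ^ k) := by
    have hnat1 : (2 ^ k + 1) * 2 ^ k = 2 ^ (2 * k) + 2 ^ k := by
      rw [two_mul, pow_add]; ring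
    have hnat2 : (2 ^ (n * k) + 1) * 2 ^ k = 2 ^ ((n + 1) * k) + 2 ^ k := by
      rw [add_mul, one_mul, add_mul, one_mul, pow_add]
    have e1 : w ^ (2 ^ k) = r ^ (2 ^ k) * a ^ (2 ^ k) * (v ^ (2 ^ (2 * k)) * v ^ (2 ^ k)) := by
      rw [hw, mul_pow, mul_pow, ← pow_mul, hnat1, pow_add]
    have e2 : N ^ (2 ^ k) = v ^ (2 ^ ((n + 1) * k)) * v ^ (2 ^ k) := by
      rw [hN, ← pow_mul, hnat2, pow_add]
    have e3 : w = r * a * (v ^ (2 ^ k) * v) := by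
      rw [hw, pow_add, pow_one]
    rw [e1, e2, e3]
    linear_combination v ^ (2 ^ k) * hL - (v ^ (2 ^ ((n + 1) * k)) * v ^ (2 ^ k)) * h2
  -- iterate: w + w^(2^(t*k)) = ∑_{j<t} N^(2^((j+1)*k))
  have key2 : ∀ t : ℕ, w + w ^ (2 ^ (t * k)) = ∑ j ∈ Finset.range t, N ^ (2 ^ ((j + 1) * k)) := by
    intro t
    induction t with
    | zero => simpa using hadd w
    | succ t ih =>
      rw [Finset.sum_range_succ, ← ih]
      have step : w ^ (2 ^ (t * k)) + w ^ (2 ^ ((t + 1) * k)) = N ^ (2 ^ ((t + 1) * k)) := by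
        have := congrArg (· ^ (2 ^ (t * k))) key1
        simp only [add_pow_char_pow] at this
        rw [← pow_mul, ← pow_mul, ← pow_add] at this
        rw [show k + t * k = (t + 1) * k by ring] at this
        exact this
      linear_combination step - (w ^ (2 ^ (t*k))) * h2
  -- w + w^(2^(n*k)) = ∑_{j<n} N^(2^(j*k))
  have key3 : w + w ^ (2 ^ (n * k)) = ∑ j ∈ Finset.range n, N ^ (2 ^ (j * k)) := by
    rw [key2 n]
    have h1 : ∑ j ∈ Finset.range n, N ^ (2 ^ ((j + 1) * k))
        = ∑ j ∈ Finset.range n, N ^ (2 ^ (j * k)) + N ^ (2 ^ (n * k)) - N ^ (2 ^ (0 * k)) := by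
      rw [← Finset.sum_range_succ]
      rw [Finset.sum_range_succ' (fun j => N ^ (2 ^ (j * k))) n]
      ring
    rw [h1, hNfix]
    simp
  -- shift invariance of the small trace sum
  have shift1 : ∀ s : ℕ, ∑ i ∈ Finset.range (n * k), N ^ (2 ^ (i + s))
        = ∑ i ∈ Finset.range (n * k), N ^ (2 ^ i) := by
    intro s
    induction s with
    | zero => simp
    | succ s ih =>
      rw [← ih]
      have e : ∀ i, N ^ (2 ^ (i + (s + 1))) = (fun j => N ^ 2 ^ (j + s)) (i + 1) := by
        intro i; simp only; congr 2; ring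
      calc ∑ i ∈ Finset.range (n * k), N ^ 2 ^ (i + (s + 1))
          = ∑ i ∈ Finset.range (n * k), (fun j => N ^ 2 ^ (j + s)) (i + 1) :=
            Finset.sum_congr rfl fun i _ => e i
        _ = ∑ i ∈ Finset.range (n * k + 1), N ^ 2 ^ (i + s) - N ^ 2 ^ (0 + s) := by
            rw [Finset.sum_range_succ' (fun j => N ^ 2 ^ (j + s)) (n * k)]; ring
        _ = ∑ i ∈ Finset.range (n * k), N ^ 2 ^ (i + s) := by
            rw [Finset.sum_range_succ]
            have hend : N ^ 2 ^ (n * k + s) = N ^ 2 ^ (0 + s) := by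
              rw [pow_add, pow_mul, hNfix, zero_add]
            rw [hend]; ring
  -- split big sum
  have hsplit : ∑ i ∈ Finset.range (2 * n * k), w ^ (2 ^ i)
      = ∑ i ∈ Finset.range (n * k), (w + w ^ (2 ^ (n * k))) ^ (2 ^ i) := by
    rw [show 2 * n * k = n * k + n * k by ring, Finset.sum_range_add,
      ← Finset.sum_add_distrib]
    refine Finset.sum_congr rfl fun i _ => ?_
    rw [add_pow_char_pow, ← pow_mul, ← pow_add]
  -- assemble
  have hbig : ∑ i ∈ Finset.range (2 * n * k), w ^ (2 ^ i)
      = ∑ j ∈ Finset.range n, ∑ i ∈ Finset.range (n * k), N ^ (2 ^ i) := by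
    rw [hsplit, key3]
    calc ∑ i ∈ Finset.range (n * k), (∑ j ∈ Finset.range n, N ^ (2 ^ (j * k))) ^ (2 ^ i)
        = ∑ i ∈ Finset.range (n * k), ∑ j ∈ Finset.range n, N ^ (2 ^ (i + j * k)) := by
          refine Finset.sum_congr rfl fun i _ => ?_
          rw [sum_pow_char_pow]
          refine Finset.sum_congr rfl fun j _ => ?_
          rw [← pow_mul, ← pow_add, Nat.add_comm]
      _ = ∑ j ∈ Finset.range n, ∑ i ∈ Finset.range (n * k), N ^ (2 ^ (i + j * k)) :=
          Finset.sum_comm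
      _ = ∑ j ∈ Finset.range n, ∑ i ∈ Finset.range (n * k), N ^ (2 ^ i) :=
          Finset.sum_congr rfl fun j _ => shift1 (j * k)
  rw [hbig, Finset.sum_const, Finset.card_range]
  have hone : (n : E) = 1 := by
    obtain ⟨l, hl⟩ := hodd
    subst hl
    push_cast
    rw [h2]; ring
  rw [nsmul_eq_mul, hone, one_mul]
  exact hadd _
end
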